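/- arXiv:2106.11871 — 10 statements merged into one kernel-verified Lean document; each statement's English description precedes it below -/
import Mathlib

section
/- For n ≥ 2, the function ψ_n(x_1,...,x_n) = √(1-x_1²)···√(1-x_n²) + x_1···x_n on [0,1]^n attains maximum value 1, and for n ≥ 3 the set of maximizers is exactly {(0,...,0), (1,...,1)}. -/
private lemma prod_le_prod_subset {n : ℕ} (s : Finset (Fin n)) (f : Fin n → ℝ)
    (h0 : ∀ i, 0 ≤ f i) (h1 : ∀ i, f i ≤ 1) :
    ∏ i, f i ≤ ∏ i ∈ s, f i := by
  rw [← Finset.prod_sdiff (Finset.subset_univ s)]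
  calc (∏ i ∈ Finset.univ \ s, f i) * ∏ i ∈ s, f i
      ≤ 1 * ∏ i ∈ s, f i := by
        apply mul_le_mul_of_nonneg_right
        · exact Finset.prod_le_one (fun i _ => h0 i) (fun i _ => h1 i)
        · exact Finset.prod_nonneg fun i _ => h0 i
    _ = ∏ i ∈ s, f i := one_mul _

private lemma two_var (a b : ℝ) (ha0 : 0 ≤ a) (ha1 : a ≤ 1) (hb0 : 0 ≤ b) (hb1 : b ≤ 1) :
    Real.sqrt (1 - a ^ 2) * Real.sqrt (1 - b ^ 2) + a * b ≤ 1 := by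
  have h1 : Real.sqrt (1 - a ^ 2) ^ 2 = 1 - a ^ 2 := Real.sq_sqrt (by nlinarith)
  have h2 : Real.sqrt (1 - b ^ 2) ^ 2 = 1 - b ^ 2 := Real.sq_sqrt (by nlinarith)
  have h3 : 0 ≤ Real.sqrt (1 - a ^ 2) := Real.sqrt_nonneg _
  have h4 : 0 ≤ Real.sqrt (1 - b ^ 2) := Real.sqrt_nonneg _
  nlinarith [sq_nonneg (Real.sqrt (1 - a ^ 2) - Real.sqrt (1 - b ^ 2)), sq_nonneg (a - b)]

/-- For `n ≥ 2`, `ψ_n(x) = ∏ √(1-x_i²) + ∏ x_i` on `[0,1]^n` attains maximum value `1`,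
and for `n ≥ 3` the maximizers are exactly the constant points `0` and `1`. -/
theorem psi_max (n : ℕ) (hn : 2 ≤ n) :
    IsGreatest ((fun x : Fin n → ℝ =>
        (∏ i, Real.sqrt (1 - (x i) ^ 2)) + ∏ i, x i) ''
        {x | ∀ i, x i ∈ Set.Icc (0 : ℝ) 1}) 1 ∧
    (3 ≤ n →
      {x : Fin n → ℝ | (∀ i, x i ∈ Set.Icc (0 : ℝ) 1) ∧
          (∏ i, Real.sqrt (1 - (x i) ^ 2)) + ∏ i, x i = 1}
        = {(fun _ => 0), (fun _ => 1)}) := by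
  have hpos : 0 < n := by omega
  -- basic facts applying for x in the box
  have key : ∀ x : Fin n → ℝ, (∀ i, x i ∈ Set.Icc (0 : ℝ) 1) →
      (∏ i, Real.sqrt (1 - (x i) ^ 2)) + ∏ i, x i ≤ 1 := by
    intro x hx
    set i0 : Fin n := ⟨0, by omega⟩
    set i1 : Fin n := ⟨1, by omega⟩
    have hne : i0 ≠ i1 := by simp [i0, i1, Fin.ext_iff]
    have hs0 : ∀ i, 0 ≤ Real.sqrt (1 - (x i) ^ 2) := fun i => Real.sqrt_nonneg _
    have hs1 : ∀ i, Real.sqrt (1 - (x i) ^ 2) ≤ 1 := by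
      intro i
      exact Real.sqrt_le_one.2 (by nlinarith [(hx i).1])
    have hQ : (∏ i, Real.sqrt (1 - (x i) ^ 2)) ≤
        Real.sqrt (1 - (x i0) ^ 2) * Real.sqrt (1 - (x i1) ^ 2) := by
      have := prod_le_prod_subset {i0, i1} (fun i => Real.sqrt (1 - (x i) ^ 2)) hs0 hs1
      rwa [Finset.prod_pair hne] at this
    have hP : (∏ i, x i) ≤ x i0 * x i1 := by
      have := prod_le_prod_subset {i0, i1} x (fun i => (hx i).1) (fun i => (hx i).2)
      rwa [Finset.prod_pair hne] at this
    have := two_var (x i0) (x i1) (hx i0).1 (hx i0).2 (hx i1).1 (hx i1).2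
    linarith
  constructor
  · constructor
    · exact ⟨fun _ => 0, fun i => by simp, by simp [hpos.ne']⟩
    · rintro y ⟨x, hx, rfl⟩
      exact key x hx
  · intro hn3
    ext x
    simp only [Set.mem_setOf_eq, Set.mem_insert_iff, Set.mem_singleton_iff]
    constructor
    · rintro ⟨hx, heq⟩
      set i0 : Fin n := ⟨0, by omega⟩
      set i1 : Fin n := ⟨1, by omega⟩
      set i2 : Fin n := ⟨2, by omega⟩
      have hs0 : ∀ i, 0 ≤ Real.sqrt (1 - (x i) ^ 2) := fun i => Real.sqrt_nonneg _
      have hs1 : ∀ i, Real.sqrt (1 - (x i) ^ 2) ≤ 1 := by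
        intro i
        exact Real.sqrt_le_one.2 (by nlinarith [(hx i).1])
      by_cases h0 : ∃ j, x j = 0
      · -- then all coordinates are 0
        obtain ⟨j, hj⟩ := h0
        left
        have hP : (∏ i, x i) = 0 := Finset.prod_eq_zero (Finset.mem_univ j) hj
        have hQ : (∏ i, Real.sqrt (1 - (x i) ^ 2)) = 1 := by linarith
        funext i
        by_contra hne
        have hxi : 0 < x i := lt_of_le_of_ne (hx i).1 (Ne.symm hne)
        have hlt : Real.sqrt (1 - (x i) ^ 2) < 1 := by
          have h' := Real.sqrt_lt_sqrt (show (0:ℝ) ≤ 1 - (x i) ^ 2 by nlinarith [(hx i).2])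
            (show 1 - (x i) ^ 2 < 1 by nlinarith)
          rwa [Real.sqrt_one] at h'
        have := prod_le_prod_subset {i} (fun i => Real.sqrt (1 - (x i) ^ 2)) hs0 hs1
        rw [Finset.prod_singleton, hQ] at this
        linarith
      · push_neg at h0
        by_cases h1 : ∃ j, x j = 1
        · obtain ⟨j, hj⟩ := h1
          right
          have hQ : (∏ i, Real.sqrt (1 - (x i) ^ 2)) = 0 :=
            Finset.prod_eq_zero (Finset.mem_univ j) (by simp [hj])
          have hP : (∏ i, x i) = 1 := by linarith
          funext i
          have := prod_le_prod_subset {i} x (fun i => (hx i).1) (fun i => (hx i).2)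
          rw [Finset.prod_singleton, hP] at this
          exact le_antisymm (hx i).2 this
        · push_neg at h1
          exfalso
          -- all x i ∈ (0,1): strict inequality
          have hxo : ∀ i, 0 < x i ∧ x i < 1 := fun i =>
            ⟨lt_of_le_of_ne (hx i).1 (Ne.symm (h0 i)), lt_of_le_of_ne (hx i).2 (h1 i)⟩
          have hne01 : i0 ≠ i1 := by simp [i0, i1, Fin.ext_iff]
          have hne02 : i0 ≠ i2 := by simp [i0, i2, Fin.ext_iff]
          have hne12 : i1 ≠ i2 := by simp [i1, i2, Fin.ext_iff]
          have hQ : (∏ i, Real.sqrt (1 - (x i) ^ 2)) ≤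
              Real.sqrt (1 - (x i0) ^ 2) * Real.sqrt (1 - (x i1) ^ 2) *
                Real.sqrt (1 - (x i2) ^ 2) := by
            have := prod_le_prod_subset {i0, i1, i2} (fun i => Real.sqrt (1 - (x i) ^ 2)) hs0 hs1
            rw [Finset.prod_insert (by simp [hne01, hne02]),
                Finset.prod_pair hne12] at this
            linarith [this]
          have hP : (∏ i, x i) ≤ x i0 * x i1 * x i2 := by
            have := prod_le_prod_subset {i0, i1, i2} x (fun i => (hx i).1) (fun i => (hx i).2)
            rw [Finset.prod_insert (by simp [hne01, hne02]),
                Finset.prod_pair hne12] at this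
            linarith [this]
          have h2v := two_var (x i0) (x i1) (hx i0).1 (hx i0).2 (hx i1).1 (hx i1).2
          have hw : Real.sqrt (1 - (x i2) ^ 2) < 1 := by
            have h' := Real.sqrt_lt_sqrt (show (0:ℝ) ≤ 1 - (x i2) ^ 2 by nlinarith [(hxo i2).2, (hxo i2).1])
              (show 1 - (x i2) ^ 2 < 1 by nlinarith [(hxo i2).1])
            rwa [Real.sqrt_one] at h'
          have huv : 0 < Real.sqrt (1 - (x i0) ^ 2) * Real.sqrt (1 - (x i1) ^ 2) := by
            apply mul_pos <;> apply Real.sqrt_pos.2 <;> nlinarith [(hxo i0).1, (hxo i0).2, (hxo i1).1, (hxo i1).2]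
          have hab : 0 < x i0 * x i1 := mul_pos (hxo i0).1 (hxo i1).1
          nlinarith [hQ, hP, h2v, hw, huv, hab, (hxo i2).2, (hxo i2).1, heq]
    · rintro (rfl | rfl)
      · exact ⟨fun i => by simp, by simp [hpos.ne']⟩
      · exact ⟨fun i => by simp, by simp [hpos.ne']⟩
end

section
/- Let ω be an alternating n-form on a finite-dimensional inner product space V with comass norm 1, where the comass norm is the maximum of ω(v_1,...,v_n) over unit vectors v_i. Then every linear map L : ℝⁿ → V satisfying ‖L‖ⁿ = ⋆L*ω (i.e., the n-th power of the operator norm of L equals ω(L(e_1),...,L(e_n))) is a conformal linear map (a nonnegative scalar multiple of a linear isometry). -/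
/-- Let `ω` be an alternating `n`-form of comass norm `1` on a finite-dimensional real inner
product space `V`.  Every linear map `L : ℝⁿ → V` with `‖L‖ⁿ = ω(L e₁, …, L eₙ)` is conformal,
i.e. a nonnegative scalar multiple of a linear isometry. -/
theorem calibrated_linear_map_is_conformal (n : ℕ)
    (V : Type*) [NormedAddCommGroup V] [InnerProductSpace ℝ V] [FiniteDimensional ℝ V]
    (ω : AlternatingMap ℝ V ℝ (Fin n))
    (hcomass : IsGreatest {r : ℝ | ∃ v : Fin n → V, (∀ i, ‖v i‖ ≤ 1) ∧ ω v = r} 1)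
    (L : EuclideanSpace ℝ (Fin n) →L[ℝ] V)
    (hL : ‖L‖ ^ n = ω (fun i => L (EuclideanSpace.single i 1))) :
    ∃ c : ℝ, 0 ≤ c ∧ ∀ v, ‖L v‖ = c * ‖v‖ := by
  classical
  rcases Nat.eq_zero_or_pos n with hn0 | hn0
  · subst hn0
    exact ⟨0, le_refl 0, fun v => by rw [Subsingleton.elim v 0]; simp⟩
  obtain ⟨m, rfl⟩ : ∃ m, n = m + 1 := ⟨n - 1, (Nat.succ_pred_eq_of_pos hn0).symm⟩
  set c := ‖L‖ with hc
  have hone : ∀ w : Fin (m + 1) → V, (∀ i, ‖w i‖ ≤ 1) → ω w ≤ 1 := fun w hw =>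
    hcomass.2 ⟨w, hw, rfl⟩
  have hone' : ∀ w : Fin (m + 1) → V, (∀ i, ‖w i‖ ≤ 1) → |ω w| ≤ 1 := by
    intro w hw
    rw [abs_le]
    refine ⟨?_, hone w hw⟩
    have h2 : ω (Function.update w 0 (-w 0)) ≤ 1 := by
      refine hone _ (fun i => ?_)
      rcases eq_or_ne i 0 with rfl | h
      · simpa using hw 0
      · simpa [Function.update_of_ne h] using hw i
    have h3 : ω (Function.update w 0 (-w 0)) = -ω w := by
      rw [ω.map_update_neg, Function.update_eq_self]
    linarith
  have habs : ∀ w : Fin (m + 1) → V, |ω w| ≤ ∏ i, ‖w i‖ := by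
    intro w
    by_cases hz : ∃ i, w i = 0
    · obtain ⟨i, hi⟩ := hz
      rw [ω.map_coord_zero i hi, abs_zero]
      exact Finset.prod_nonneg fun _ _ => norm_nonneg _
    · push_neg at hz
      set u : Fin (m + 1) → V := fun i => ‖w i‖⁻¹ • w i with hu
      have hwu : w = fun i => ‖w i‖ • u i := by
        funext i
        simp [hu, smul_smul, mul_inv_cancel₀ (norm_ne_zero_iff.2 (hz i))]
      have h4 : ω w = (∏ i, ‖w i‖) • ω u := by
        conv_lhs => rw [hwu]
        exact ω.toMultilinearMap.map_smul_univ _ _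
      have hun : ∀ i, ‖u i‖ ≤ 1 := by
        intro i
        rw [hu]
        simp only [norm_smul, norm_inv, norm_norm]
        exact le_of_eq (inv_mul_cancel₀ (norm_ne_zero_iff.2 (hz i)))
      have hprod : (0:ℝ) ≤ ∏ i, ‖w i‖ := Finset.prod_nonneg fun _ _ => norm_nonneg _
      rw [h4, smul_eq_mul, abs_mul, abs_of_nonneg hprod]
      calc (∏ i, ‖w i‖) * |ω u| ≤ (∏ i, ‖w i‖) * 1 :=
            mul_le_mul_of_nonneg_left (hone' u hun) hprod
        _ = ∏ i, ‖w i‖ := mul_one _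
  set φ : AlternatingMap ℝ (EuclideanSpace ℝ (Fin (m + 1))) ℝ (Fin (m + 1)) := ω.compLinearMap (L : EuclideanSpace ℝ (Fin (m + 1)) →ₗ[ℝ] V) with hφ
  set b₀ : OrthonormalBasis (Fin (m + 1)) ℝ (EuclideanSpace ℝ (Fin (m + 1))) := EuclideanSpace.basisFun (Fin (m + 1)) ℝ with hb₀
  have hφ0 : φ b₀ = c ^ (m + 1) := by
    rw [hφ, AlternatingMap.compLinearMap_apply, hL]
    simp only [hb₀, EuclideanSpace.basisFun_apply, ContinuousLinearMap.coe_coe]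
  have hkey : ∀ b : OrthonormalBasis (Fin (m + 1)) ℝ (EuclideanSpace ℝ (Fin (m + 1))), |φ b| = c ^ (m + 1) := by
    intro b
    have h1 := φ.eq_smul_basis_det b₀.toBasis
    have h2 : φ b = φ b₀ * b₀.toBasis.det b := by
      conv_lhs => rw [h1]
      simp
    have h3 : |b₀.toBasis.det b| = 1 := by
      have := b₀.det_to_matrix_orthonormalBasis (b := b)
      rwa [Real.norm_eq_abs] at this
    rw [h2, abs_mul, h3, mul_one, hφ0, abs_of_nonneg (pow_nonneg (norm_nonneg L) _)]
  refine ⟨c, norm_nonneg L, fun v => ?_⟩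
  rcases eq_or_ne v 0 with rfl | hv0
  · simp
  have hunit : ∀ u : EuclideanSpace ℝ (Fin (m + 1)), ‖u‖ = 1 → ‖L u‖ = c := by
    intro u hu
    have hle : ‖L u‖ ≤ c := by simpa [hu] using L.le_opNorm u
    rcases eq_or_lt_of_le (norm_nonneg L) with hc0 | hc0
    · have h0 : c = 0 := hc0.symm
      have := norm_nonneg (L u)
      linarith [hle, h0 ▸ hle]
    have hcard : Module.finrank ℝ (EuclideanSpace ℝ (Fin (m + 1))) = Fintype.card (Fin (m + 1)) := by
      simp
    have ho : Orthonormal ℝ (({0} : Set (Fin (m + 1))).restrict (fun _ => u)) := by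
      constructor
      · intro i
        simpa [Set.restrict] using hu
      · intro i j hij
        exact absurd (Subtype.ext (i.2.trans j.2.symm)) hij
    obtain ⟨b, hb⟩ := ho.exists_orthonormalBasis_extension_of_card_eq hcard
    have hb0 : b 0 = u := hb 0 rfl
    have h1 : c ^ (m + 1) ≤ ∏ i, ‖L (b i)‖ := by
      calc c ^ (m + 1) = |φ b| := (hkey b).symm
        _ = |ω (fun i => L (b i))| := by rw [hφ, AlternatingMap.compLinearMap_apply]; rfl
        _ ≤ ∏ i, ‖L (b i)‖ := habs _
    have hbnorm : ∀ i : Fin (m + 1), ‖L (b i)‖ ≤ c := by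
      intro i
      simpa [b.orthonormal.1 i] using L.le_opNorm (b i)
    have h2 : ∏ i, ‖L (b i)‖ ≤ ‖L u‖ * c ^ m := by
      rw [← Finset.mul_prod_erase Finset.univ _ (Finset.mem_univ 0), hb0]
      refine mul_le_mul_of_nonneg_left ?_ (norm_nonneg _)
      calc ∏ i ∈ Finset.univ.erase 0, ‖L (b i)‖ ≤ ∏ _i ∈ Finset.univ.erase 0, c :=
            Finset.prod_le_prod (fun i _ => norm_nonneg _) (fun i _ => hbnorm i)
        _ = c ^ m := by
            rw [Finset.prod_const]
            congr 1
            rw [Finset.card_erase_of_mem (Finset.mem_univ _), Finset.card_univ]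
            simp
    have h3 : c * c ^ m ≤ ‖L u‖ * c ^ m := by
      rw [← pow_succ']
      exact h1.trans h2
    have h4 := le_of_mul_le_mul_right h3 (pow_pos hc0 m)
    linarith
  have hu1 : ‖(‖v‖⁻¹ • v : EuclideanSpace ℝ (Fin (m + 1)))‖ = 1 := by
    rw [norm_smul, norm_inv, norm_norm, inv_mul_cancel₀ (norm_ne_zero_iff.2 hv0)]
  have h5 := hunit _ hu1
  rw [map_smul, norm_smul, norm_inv, norm_norm] at h5
  have hvn : ‖v‖ ≠ 0 := norm_ne_zero_iff.2 hv0
  field_simp at h5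
  rw [h5, mul_comm]
end

section
/- For each n ≥ 2 and k ≥ 1, the n-form vol^×_{(ℝⁿ)^k} = Σ_{i=1}^k π_i* vol_{ℝⁿ} on (ℝⁿ)^k has comass norm exactly 1; that is, for every linear map L = (L_1,...,L_k) : ℝⁿ → (ℝⁿ)^k with |L(e_j)| ≤ 1 for all j, one has Σ_{i=1}^k det L_i ≤ 1, and this bound is attained. -/
/-!
By Hadamard's inequality `|det Lᵢ| ≤ ∏ⱼ |Lᵢ eⱼ|`, and every factor is at most `|L eⱼ| ≤ 1`, so
`det Lᵢ ≤ |Lᵢ e₀| |Lᵢ e₁|` (this is where `n ≥ 2` enters). Summing over `i` and applying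
Cauchy–Schwarz gives `∑ᵢ det Lᵢ ≤ |L e₀| |L e₁| ≤ 1`. Equality holds for `L = (id, 0, …, 0)`.
-/

open Finset Module

theorem LinearMap.abs_det_le_prod_norm_apply {E : Type*} [NormedAddCommGroup E]
    [InnerProductSpace ℝ E] {n : ℕ} (b : OrthonormalBasis (Fin n) ℝ E) (f : E →ₗ[ℝ] E) :
    |LinearMap.det f| ≤ ∏ j, ‖f (b j)‖ := by
  have : Fact (finrank ℝ E = n) := ⟨by simpa using finrank_eq_card_basis b.toBasis⟩
  have h := b.toBasis.orientation.abs_volumeForm_apply_le (f ∘ b)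
  rwa [b.toBasis.orientation.volumeForm_robust b rfl, ← b.coe_toBasis, Basis.det_comp,
    Basis.det_self, mul_one] at h

theorem PiLp.sum_norm_mul_norm_le {ι : Type*} [Fintype ι] {β : ι → Type*}
    [∀ i, SeminormedAddCommGroup (β i)] (x y : PiLp 2 β) :
    ∑ i, ‖x i‖ * ‖y i‖ ≤ ‖x‖ * ‖y‖ := by
  simpa only [PiLp.norm_eq_of_L2] using Real.sum_mul_le_sqrt_mul_sqrt univ (‖x ·‖) (‖y ·‖)

section

variable {E : Type*} [NormedAddCommGroup E] [InnerProductSpace ℝ E] {n : ℕ}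

theorem LinearMap.det_le_norm_mul_norm_of_norm_apply_le_one (b : OrthonormalBasis (Fin n) ℝ E)
    (f : E →ₗ[ℝ] E) (hf : ∀ j, ‖f (b j)‖ ≤ 1) {j₀ j₁ : Fin n} (hj : j₀ ≠ j₁) :
    LinearMap.det f ≤ ‖f (b j₀)‖ * ‖f (b j₁)‖ :=
  calc LinearMap.det f ≤ ∏ j, ‖f (b j)‖ := (le_abs_self _).trans (f.abs_det_le_prod_norm_apply b)
    _ ≤ ∏ j ∈ {j₀, j₁}, ‖f (b j)‖ :=
      prod_le_prod_of_subset_of_le_one (subset_univ _) (fun _ _ ↦ norm_nonneg _)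
        (fun j _ _ ↦ hf j)
    _ = ‖f (b j₀)‖ * ‖f (b j₁)‖ := prod_pair hj

theorem sum_det_le_one_of_norm_apply_le_one {ι : Type*} [Fintype ι]
    (b : OrthonormalBasis (Fin n) ℝ E)
    (L : E → PiLp 2 (fun _ : ι ↦ E)) (f : ι → E →ₗ[ℝ] E) (hLf : ∀ i v, f i v = L v i)
    (hL : ∀ j, ‖L (b j)‖ ≤ 1) (hn : 2 ≤ n) : ∑ i, LinearMap.det (f i) ≤ 1 := by
  let j₀ : Fin n := ⟨0, by omega⟩
  let j₁ : Fin n := ⟨1, by omega⟩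
  have hf : ∀ i j, ‖f i (b j)‖ ≤ 1 := fun i j ↦ by
    rw [hLf]; exact (PiLp.norm_apply_le _ i).trans (hL j)
  calc ∑ i, LinearMap.det (f i) ≤ ∑ i, ‖L (b j₀) i‖ * ‖L (b j₁) i‖ := by
        refine sum_le_sum fun i _ ↦ ?_
        simpa only [hLf] using (f i).det_le_norm_mul_norm_of_norm_apply_le_one b (hf i)
          (j₀ := j₀) (j₁ := j₁) (by simp [j₀, j₁, Fin.ext_iff])
    _ ≤ ‖L (b j₀)‖ * ‖L (b j₁)‖ := PiLp.sum_norm_mul_norm_le _ _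
    _ ≤ 1 := mul_le_one₀ (hL j₀) (norm_nonneg _) (hL j₁)

end

/-- For `n ≥ 2` and `k ≥ 1`, the comass norm of `vol^×_{(ℝⁿ)^k}` is exactly `1`: the greatest
value of `∑ᵢ det Lᵢ` over linear maps `L = (L₁,…,L_k) : ℝⁿ → (ℝⁿ)^k` with `|L(eⱼ)| ≤ 1` for all
`j` is `1`. -/
theorem comass_vol_times (n k : ℕ) (hn : 2 ≤ n) (hk : 1 ≤ k) :
    IsGreatest {r : ℝ |
      ∃ (L : EuclideanSpace ℝ (Fin n) →L[ℝ]
            PiLp 2 (fun _ : Fin k => EuclideanSpace ℝ (Fin n)))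
        (Li : Fin k → (EuclideanSpace ℝ (Fin n) →ₗ[ℝ] EuclideanSpace ℝ (Fin n))),
        (∀ i v, Li i v = L v i) ∧
        (∀ j : Fin n, ‖L (EuclideanSpace.single j 1)‖ ≤ 1) ∧
        r = ∑ i, LinearMap.det (Li i)} 1 := by
  classical
  refine ⟨?_, ?_⟩
  · let i₀ : Fin k := ⟨0, hk⟩
    let L : EuclideanSpace ℝ (Fin n) →L[ℝ] PiLp 2 (fun _ : Fin k => EuclideanSpace ℝ (Fin n)) :=
      (PiLp.continuousLinearEquiv 2 ℝ _).symm.toContinuousLinearMap ∘L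
        ContinuousLinearMap.single ℝ (fun _ : Fin k ↦ EuclideanSpace ℝ (Fin n)) i₀
    refine ⟨L, fun i ↦ if i = i₀ then LinearMap.id else 0, fun i v ↦ ?_, fun j ↦ ?_, ?_⟩
    · rcases eq_or_ne i i₀ with rfl | h <;> simp [L, *]
    · simp [L, PiLp.norm_single]
    · simp [apply_ite LinearMap.det, LinearMap.det_zero, zero_pow (by omega : n ≠ 0)]
  · rintro r ⟨L, Li, hLi, hL, rfl⟩
    exact sum_det_le_one_of_norm_apply_le_one (EuclideanSpace.basisFun (Fin n) ℝ) L Li hLi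
      (by simpa only [EuclideanSpace.basisFun_apply] using hL) hn
end

section
/- Let n ≥ 3 and k ≥ 1. If a linear map L = (L_1,...,L_k) : ℝⁿ → (ℝⁿ)^k satisfies ‖L‖ⁿ = Σ_{i=1}^k det L_i, then L is conformal and there exists an index i_0 ∈ {1,...,k} such that L_{i_0} is conformal and L_i = 0 for all i ≠ i_0. -/
/-!
Write `M = ‖L‖` and fix an orthonormal basis `(bⱼ)`. By Hadamard's inequality and AM-GM,
`det Lᵢ ≤ ∏ⱼ ‖Lᵢ bⱼ‖ ≤ (1/n) ∑ⱼ ‖Lᵢ bⱼ‖ⁿ`, while in each column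
`∑ᵢ ‖Lᵢ bⱼ‖ⁿ ≤ Mⁿ⁻² ∑ᵢ ‖Lᵢ bⱼ‖² = Mⁿ⁻² ‖L bⱼ‖² ≤ Mⁿ`. Summing gives `∑ᵢ det Lᵢ ≤ Mⁿ`, so the
hypothesis makes every column bound sharp. As `n ≥ 3`, a sharp column has at most one nonzero
entry, and a map `L_{i₀}` of positive determinant has no zero column, so all other `Lᵢ` vanish.
Then `det L_{i₀} = Mⁿ` and `‖L_{i₀}‖ ≤ M`, and Hadamard's inequality in an orthonormal basis
through a unit vector `u` forces `‖L_{i₀} u‖ = M`.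
-/

open Finset Module

theorem Real.prod_le_sum_pow_card_div_card {ι : Type*} [Fintype ι] [Nonempty ι] {x : ι → ℝ}
    (hx : ∀ i, 0 ≤ x i) : ∏ i, x i ≤ (∑ i, x i ^ Fintype.card ι) / Fintype.card ι := by
  set n := Fintype.card ι
  have hn : n ≠ 0 := Fintype.card_ne_zero
  calc ∏ i, x i = ∏ i, (x i ^ n) ^ (n : ℝ)⁻¹ :=
        prod_congr rfl fun i _ => (Real.pow_rpow_inv_natCast (hx i) hn).symm
    _ ≤ ∑ i, (n : ℝ)⁻¹ * x i ^ n :=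
        Real.geom_mean_le_arith_mean_weighted univ _ _ (fun _ _ => by positivity)
          (by simp [n, hn]) fun i _ => pow_nonneg (hx i) n
    _ = (∑ i, x i ^ n) / n := by rw [← mul_sum, inv_mul_eq_div]

section PowerSums

variable {ι : Type*} [Fintype ι] {x : ι → ℝ} {M : ℝ} {n : ℕ}

theorem pow_le_sq_mul_pow_sub {a : ℝ} (hn : 2 ≤ n) (ha : 0 ≤ a) (haM : a ≤ M) :
    a ^ n ≤ a ^ 2 * M ^ (n - 2) := by
  rw [← Nat.add_sub_cancel' hn, pow_add, Nat.add_sub_cancel_left]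
  gcongr

theorem pow_lt_sq_mul_pow_sub {a : ℝ} (hn : 3 ≤ n) (ha : 0 < a) (haM : a < M) :
    a ^ n < a ^ 2 * M ^ (n - 2) := by
  rw [← Nat.add_sub_cancel' (by omega : 2 ≤ n), pow_add, Nat.add_sub_cancel_left]
  gcongr
  omega

theorem sum_sq_mul_pow_sub_le (hn : 2 ≤ n) (hM : 0 ≤ M) (h : ∑ i, x i ^ 2 ≤ M ^ 2) :
    ∑ i, x i ^ 2 * M ^ (n - 2) ≤ M ^ n := by
  rw [← sum_mul, ← Nat.add_sub_cancel' hn, pow_add, Nat.add_sub_cancel_left]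
  gcongr

theorem le_of_sum_sq_le (hM : 0 ≤ M) (h : ∑ i, x i ^ 2 ≤ M ^ 2) (i : ι) : x i ≤ M :=
  le_of_sq_le_sq ((single_le_sum (fun j _ => sq_nonneg (x j)) (mem_univ i)).trans h) hM

theorem sum_pow_le_of_sum_sq_le (hn : 2 ≤ n) (hx : ∀ i, 0 ≤ x i) (hM : 0 ≤ M)
    (h : ∑ i, x i ^ 2 ≤ M ^ 2) : ∑ i, x i ^ n ≤ M ^ n :=
  (sum_le_sum fun i _ => pow_le_sq_mul_pow_sub hn (hx i) (le_of_sum_sq_le hM h i)).trans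
    (sum_sq_mul_pow_sub_le hn hM h)

theorem eq_of_sum_pow_eq_of_sum_sq_le (hn : 3 ≤ n) (hx : ∀ i, 0 ≤ x i) (hM : 0 ≤ M)
    (h : ∑ i, x i ^ 2 ≤ M ^ 2) (heq : ∑ i, x i ^ n = M ^ n) {p q : ι} (hp : x p ≠ 0)
    (hq : x q ≠ 0) : p = q := by
  classical
  by_contra hpq
  have hxp : x p < M := by
    refine lt_of_pow_lt_pow_left₀ 2 hM ?_
    calc x p ^ 2 < x p ^ 2 + x q ^ 2 := lt_add_of_pos_right _ (by positivity)
      _ = ∑ i ∈ {p, q}, x i ^ 2 := by rw [sum_pair hpq]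
      _ ≤ ∑ i, x i ^ 2 := sum_le_univ_sum_of_nonneg fun i => sq_nonneg (x i)
      _ ≤ M ^ 2 := h
  refine heq.not_lt ((sum_lt_sum (fun i _ => ?_) ⟨p, mem_univ p, ?_⟩).trans_le
    (sum_sq_mul_pow_sub_le (by omega) hM h))
  · exact pow_le_sq_mul_pow_sub (by omega) (hx i) (le_of_sum_sq_le hM h i)
  · exact pow_lt_sq_mul_pow_sub hn ((hx p).lt_of_ne' hp) hxp

theorem eq_of_le_of_pow_card_le_prod (hx : ∀ i, 0 ≤ x i) (hxM : ∀ i, x i ≤ M)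
    (h : M ^ Fintype.card ι ≤ ∏ i, x i) (i : ι) : x i = M := by
  classical
  by_contra hne
  have hlt : x i < M := (hxM i).lt_of_ne hne
  have hM : 0 < M := (hx i).trans_lt hlt
  refine absurd h (not_le.2 ?_)
  calc ∏ j, x j = x i * ∏ j ∈ univ.erase i, x j := (mul_prod_erase _ _ (mem_univ i)).symm
    _ ≤ x i * ∏ _j ∈ univ.erase i, M :=
        mul_le_mul_of_nonneg_left (prod_le_prod (fun j _ => hx j) fun j _ => hxM j) (hx i)
    _ = x i * M ^ (Fintype.card ι - 1) := by
        rw [prod_const, card_erase_of_mem (mem_univ i), card_univ]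
    _ < M * M ^ (Fintype.card ι - 1) := by gcongr
    _ = M ^ Fintype.card ι := by rw [← pow_succ', Nat.sub_add_cancel (Fintype.card_pos_iff.2 ⟨i⟩)]

end PowerSums

section Hadamard

variable {E : Type*} [NormedAddCommGroup E] [InnerProductSpace ℝ E] [FiniteDimensional ℝ E]
  {ι : Type*} [Fintype ι] [LinearOrder ι] [LocallyFiniteOrderBot ι]

theorem OrthonormalBasis.abs_det_le_prod_norm (b : OrthonormalBasis ι ℝ E) (f : ι → E) :
    |b.toBasis.det f| ≤ ∏ i, ‖f i‖ := by
  classical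
  set g := InnerProductSpace.gramSchmidtOrthonormalBasis (finrank_eq_card_basis b.toBasis) f
  have hbg : |b.toBasis.det g| = 1 :=
    (Real.norm_eq_abs _).symm.trans (b.det_to_matrix_orthonormalBasis g)
  calc |b.toBasis.det f| = |g.toBasis.det f| := by
        rw [b.toBasis.det.eq_smul_basis_det g.toBasis]
        simp [abs_mul, hbg]
    _ = ∏ i, |inner ℝ (g i) (f i)| := by
        rw [InnerProductSpace.gramSchmidtOrthonormalBasis_det, abs_prod]
    _ ≤ ∏ i, ‖f i‖ := by
        gcongr with i
        simpa [g.orthonormal.1 i] using abs_real_inner_le_norm (g i) (f i)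

theorem LinearMap.abs_det_le_prod_norm (b : OrthonormalBasis ι ℝ E) (A : E →ₗ[ℝ] E) :
    |LinearMap.det A| ≤ ∏ i, ‖A (b i)‖ := by
  classical
  have h := b.abs_det_le_prod_norm (A ∘ b.toBasis)
  rwa [Basis.det_comp, Basis.det_self, mul_one, OrthonormalBasis.coe_toBasis] at h

theorem LinearMap.det_le_sum_norm_pow_div [Nonempty ι] (b : OrthonormalBasis ι ℝ E)
    (A : E →ₗ[ℝ] E) : LinearMap.det A ≤ (∑ i, ‖A (b i)‖ ^ Fintype.card ι) / Fintype.card ι :=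
  (le_abs_self _).trans <| (A.abs_det_le_prod_norm b).trans <|
    Real.prod_le_sum_pow_card_div_card fun _ => norm_nonneg _

end Hadamard

section Calibration

variable {E : Type*} [NormedAddCommGroup E] [InnerProductSpace ℝ E] [FiniteDimensional ℝ E]

theorem LinearMap.norm_map_eq_of_det_eq_pow {A : E →ₗ[ℝ] E} {M : ℝ}
    (hA : ∀ v, ‖A v‖ ≤ M * ‖v‖) (hdet : LinearMap.det A = M ^ finrank ℝ E) (v : E) :
    ‖A v‖ = M * ‖v‖ := by
  suffices hunit : ∀ u : E, ‖u‖ = 1 → ‖A u‖ = M by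
    rcases eq_or_ne v 0 with rfl | hv
    · simp
    · have h := hunit (‖v‖⁻¹ • v) (by
        rw [norm_smul, norm_inv, norm_norm, inv_mul_cancel₀ (norm_ne_zero_iff.2 hv)])
      rw [map_smul, norm_smul, norm_inv, norm_norm, inv_mul_eq_div,
        div_eq_iff (norm_ne_zero_iff.2 hv)] at h
      rw [h, mul_comm]
  intro u hu
  have : Nontrivial E := nontrivial_of_ne u 0 (by rintro rfl; simp at hu)
  let i₀ : Fin (finrank ℝ E) := ⟨0, finrank_pos⟩
  obtain ⟨b, hb⟩ := Orthonormal.exists_orthonormalBasis_extension_of_card_eq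
    (Fintype.card_fin _).symm (v := fun _ => u) (s := {i₀})
    (orthonormal_iff_ite.2 fun i j => by simp [Subsingleton.elim i j, hu])
  rw [← hb i₀ rfl]
  refine eq_of_le_of_pow_card_le_prod (x := fun i => ‖A (b i)‖) (fun _ => norm_nonneg _)
    (fun i => by simpa [b.orthonormal.1 i] using hA (b i)) ?_ i₀
  rw [Fintype.card_fin, ← hdet]
  exact (le_abs_self _).trans (A.abs_det_le_prod_norm b)

variable {ι : Type*} [Fintype ι] {Li : ι → E →ₗ[ℝ] E} {M : ℝ}

theorem exists_forall_ne_eq_zero_of_sum_det_eq_pow (hn : 3 ≤ finrank ℝ E) (hM : 0 < M)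
    (hbound : ∀ v, ∑ i, ‖Li i v‖ ^ 2 ≤ (M * ‖v‖) ^ 2)
    (hdet : ∑ i, LinearMap.det (Li i) = M ^ finrank ℝ E) :
    ∃ i₀, ∀ i ≠ i₀, Li i = 0 := by
  set n := finrank ℝ E
  have : Nonempty (Fin n) := ⟨⟨0, by omega⟩⟩
  let b := stdOrthonormalBasis ℝ E
  have hcol_sq : ∀ j, ∑ i, ‖Li i (b j)‖ ^ 2 ≤ M ^ 2 := fun j => by
    simpa [b.orthonormal.1 j] using hbound (b j)
  have hcol_le : ∀ j, ∑ i, ‖Li i (b j)‖ ^ n ≤ M ^ n := fun j =>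
    sum_pow_le_of_sum_sq_le (by omega) (fun _ => norm_nonneg _) hM.le (hcol_sq j)
  have hcol_eq : ∀ j, ∑ i, ‖Li i (b j)‖ ^ n = M ^ n := by
    have hsum : ∑ _j : Fin n, M ^ n ≤ ∑ j, ∑ i, ‖Li i (b j)‖ ^ n := calc
      ∑ _j : Fin n, M ^ n = n * ∑ i, LinearMap.det (Li i) := by simp [hdet]
      _ ≤ n * ∑ i, (∑ j, ‖Li i (b j)‖ ^ n) / n := by
          gcongr with i
          simpa using (Li i).det_le_sum_norm_pow_div b
      _ = ∑ j, ∑ i, ‖Li i (b j)‖ ^ n := by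
          rw [← sum_div, mul_div_cancel₀ _ (by positivity), sum_comm]
    intro j
    exact (sum_eq_sum_iff_of_le fun j _ => hcol_le j).1
      ((sum_le_sum fun j _ => hcol_le j).antisymm hsum) j (mem_univ j)
  obtain ⟨i₀, -, hi₀⟩ : ∃ i₀ ∈ univ, (0 : ℝ) < LinearMap.det (Li i₀) :=
    exists_lt_of_sum_lt (by simpa [hdet] using pow_pos hM n)
  have hi₀_ne : ∀ j, ‖Li i₀ (b j)‖ ≠ 0 := fun j =>
    prod_ne_zero_iff.1 (hi₀.trans_le ((le_abs_self _).trans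
      ((Li i₀).abs_det_le_prod_norm b))).ne' j (mem_univ j)
  refine ⟨i₀, fun i hi => b.toBasis.ext fun j => ?_⟩
  by_contra hij
  exact hi (eq_of_sum_pow_eq_of_sum_sq_le hn (fun _ => norm_nonneg _) hM.le (hcol_sq j)
    (hcol_eq j) (by simpa using hij) (hi₀_ne j))

theorem exists_forall_ne_eq_zero_and_norm_map_eq_of_sum_det_eq_pow [Nonempty ι]
    (hn : 3 ≤ finrank ℝ E) (hM : 0 ≤ M)
    (hbound : ∀ v, ∑ i, ‖Li i v‖ ^ 2 ≤ (M * ‖v‖) ^ 2)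
    (hdet : ∑ i, LinearMap.det (Li i) = M ^ finrank ℝ E) :
    ∃ i₀, (∀ i ≠ i₀, Li i = 0) ∧ ∀ v, ‖Li i₀ v‖ = M * ‖v‖ := by
  have hle : ∀ i v, ‖Li i v‖ ≤ M * ‖v‖ := fun i v =>
    le_of_sum_sq_le (x := fun i => ‖Li i v‖) (by positivity) (hbound v) i
  rcases hM.eq_or_lt with rfl | hM
  · have hzero : ∀ i v, Li i v = 0 := fun i v => norm_le_zero_iff.1 (by simpa using hle i v)
    exact ⟨Classical.arbitrary ι, fun i _ => LinearMap.ext (hzero i), fun v => by simp [hzero]⟩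
  obtain ⟨i₀, hzero⟩ := exists_forall_ne_eq_zero_of_sum_det_eq_pow hn hM hbound hdet
  refine ⟨i₀, hzero, (Li i₀).norm_map_eq_of_det_eq_pow (hle i₀) ?_⟩
  rwa [sum_eq_single i₀ (fun i _ hi => by simp [hzero i hi]; omega) (by simp)] at hdet

end Calibration

/-- For `n ≥ 3` and `k ≥ 1`: if a linear map `L = (L₁,…,L_k) : ℝⁿ → (ℝⁿ)^k` satisfies
`‖L‖ⁿ = ∑ᵢ det Lᵢ`, then `L` is conformal and there is an index `i₀` with `L_{i₀}` conformal
and `Lᵢ = 0` for `i ≠ i₀`. -/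
theorem vol_times_calibrated_linear_rigidity (n k : ℕ) (hn : 3 ≤ n) (hk : 1 ≤ k)
    (L : EuclideanSpace ℝ (Fin n) →L[ℝ]
        PiLp 2 (fun _ : Fin k => EuclideanSpace ℝ (Fin n)))
    (Li : Fin k → (EuclideanSpace ℝ (Fin n) →L[ℝ] EuclideanSpace ℝ (Fin n)))
    (hLi : ∀ i v, Li i v = L v i)
    (hL : ‖L‖ ^ n = ∑ i, LinearMap.det
        ((Li i : EuclideanSpace ℝ (Fin n) →ₗ[ℝ] EuclideanSpace ℝ (Fin n)))) :
    (∃ c : ℝ, 0 ≤ c ∧ ∀ v, ‖L v‖ = c * ‖v‖) ∧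
    ∃ i₀ : Fin k, (∃ c : ℝ, 0 ≤ c ∧ ∀ v, ‖Li i₀ v‖ = c * ‖v‖) ∧
      ∀ i, i ≠ i₀ → Li i = 0 := by
  have hsplit : ∀ v, ‖L v‖ ^ 2 = ∑ i, ‖Li i v‖ ^ 2 := fun v => by
    simp only [hLi, PiLp.norm_sq_eq_of_L2]
  have : Nonempty (Fin k) := ⟨⟨0, hk⟩⟩
  obtain ⟨i₀, hzero', hconf⟩ := exists_forall_ne_eq_zero_and_norm_map_eq_of_sum_det_eq_pow
    (Li := fun i => (Li i : EuclideanSpace ℝ (Fin n) →ₗ[ℝ] EuclideanSpace ℝ (Fin n)))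
    (by rwa [finrank_euclideanSpace_fin]) (norm_nonneg L)
    (fun v => hsplit v ▸ pow_le_pow_left₀ (norm_nonneg _) (L.le_opNorm v) 2)
    (by rw [finrank_euclideanSpace_fin, hL])
  have hzero : ∀ i ≠ i₀, Li i = 0 := fun i hi => ContinuousLinearMap.coe_injective (hzero' i hi)
  have hL_eq : ∀ v, ‖L v‖ = ‖Li i₀ v‖ := fun v => by
    have h := hsplit v
    rw [sum_eq_single i₀ (fun i _ hi => by simp [hzero i hi]) (by simp)] at h
    exact (sq_eq_sq₀ (norm_nonneg _) (norm_nonneg _)).1 h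
  exact ⟨⟨‖L‖, norm_nonneg L, fun v => (hL_eq v).trans (hconf v)⟩, i₀,
    ⟨‖L‖, norm_nonneg L, hconf⟩, hzero⟩
end

section
/- Let n = 2 and k ≥ 1. If a linear map L = (L_1,...,L_k) : ℝ² → (ℝ²)^k satisfies ‖L‖² = Σ_{i=1}^k det L_i, then every component L_i : ℝ² → ℝ² is a conformal linear map. -/
lemma euclid_det_fin_two (f : EuclideanSpace ℝ (Fin 2) →ₗ[ℝ] EuclideanSpace ℝ (Fin 2)) :
    LinearMap.det f = f (EuclideanSpace.single 0 1) 0 * f (EuclideanSpace.single 1 1) 1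
      - f (EuclideanSpace.single 1 1) 0 * f (EuclideanSpace.single 0 1) 1 := by
  rw [← LinearMap.det_toMatrix (EuclideanSpace.basisFun (Fin 2) ℝ).toBasis f,
    Matrix.det_fin_two]
  simp [LinearMap.toMatrix_apply, EuclideanSpace.basisFun_apply]

lemma euclid_norm_sq (x : EuclideanSpace ℝ (Fin 2)) : ‖x‖ ^ 2 = x 0 ^ 2 + x 1 ^ 2 := by
  rw [EuclideanSpace.norm_eq, Real.sq_sqrt (by positivity)]
  simp [Fin.sum_univ_two, sq_abs]

lemma euclid_decomp (v : EuclideanSpace ℝ (Fin 2)) :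
    v = v 0 • EuclideanSpace.single 0 (1:ℝ) + v 1 • EuclideanSpace.single 1 (1:ℝ) := by
  ext m
  fin_cases m <;>
    simp [EuclideanSpace.single_apply]

/-- For `n = 2` and `k ≥ 1`: if a linear map `L = (L₁,…,L_k) : ℝ² → (ℝ²)^k` satisfies
`‖L‖² = ∑ᵢ det Lᵢ`, then every component `Lᵢ` is a conformal linear map. -/
theorem vol_times_calibrated_linear_rigidity_dim_two (k : ℕ) (hk : 1 ≤ k)
    (L : EuclideanSpace ℝ (Fin 2) →L[ℝ]
        PiLp 2 (fun _ : Fin k => EuclideanSpace ℝ (Fin 2)))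
    (Li : Fin k → (EuclideanSpace ℝ (Fin 2) →L[ℝ] EuclideanSpace ℝ (Fin 2)))
    (hLi : ∀ i v, Li i v = L v i)
    (hL : ‖L‖ ^ 2 = ∑ i, LinearMap.det
        ((Li i : EuclideanSpace ℝ (Fin 2) →ₗ[ℝ] EuclideanSpace ℝ (Fin 2)))) :
    ∀ i : Fin k, ∃ c : ℝ, 0 ≤ c ∧ ∀ v, ‖Li i v‖ = c * ‖v‖ := by
  set e0 : EuclideanSpace ℝ (Fin 2) := EuclideanSpace.single 0 (1:ℝ) with he0
  set e1 : EuclideanSpace ℝ (Fin 2) := EuclideanSpace.single 1 (1:ℝ) with he1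
  set a : Fin k → ℝ := fun i => Li i e0 0 with ha
  set c : Fin k → ℝ := fun i => Li i e0 1 with hc
  set b : Fin k → ℝ := fun i => Li i e1 0 with hb
  set d : Fin k → ℝ := fun i => Li i e1 1 with hd
  have hdet : ∀ i, LinearMap.det
      ((Li i : EuclideanSpace ℝ (Fin 2) →ₗ[ℝ] EuclideanSpace ℝ (Fin 2)))
      = a i * d i - b i * c i := fun i => euclid_det_fin_two _
  -- operator norm bounds
  have hne0 : ‖e0‖ = 1 := by simp [he0, EuclideanSpace.norm_single]
  have hne1 : ‖e1‖ = 1 := by simp [he1, EuclideanSpace.norm_single]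
  have hLe0 : ‖L e0‖ ≤ ‖L‖ := by simpa [hne0] using L.le_opNorm e0
  have hLe1 : ‖L e1‖ ≤ ‖L‖ := by simpa [hne1] using L.le_opNorm e1
  have hLe0sq : ‖L e0‖ ^ 2 = ∑ i, (a i ^ 2 + c i ^ 2) := by
    rw [PiLp.norm_sq_eq_of_L2]
    refine Finset.sum_congr rfl fun i _ => ?_
    rw [← hLi]
    exact euclid_norm_sq _
  have hLe1sq : ‖L e1‖ ^ 2 = ∑ i, (b i ^ 2 + d i ^ 2) := by
    rw [PiLp.norm_sq_eq_of_L2]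
    refine Finset.sum_congr rfl fun i _ => ?_
    rw [← hLi]
    exact euclid_norm_sq _
  -- the sum of half quadratic terms is ≤ ‖L‖²
  have hnormL : (0:ℝ) ≤ ‖L‖ := norm_nonneg _
  have hub : ∑ i, (a i ^ 2 + b i ^ 2 + c i ^ 2 + d i ^ 2) / 2 ≤ ‖L‖ ^ 2 := by
    have h0 : ‖L e0‖ ^ 2 ≤ ‖L‖ ^ 2 := by
      apply pow_le_pow_left₀ (norm_nonneg _) hLe0
    have h1 : ‖L e1‖ ^ 2 ≤ ‖L‖ ^ 2 := by
      apply pow_le_pow_left₀ (norm_nonneg _) hLe1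
    have : ∑ i, (a i ^ 2 + b i ^ 2 + c i ^ 2 + d i ^ 2) / 2
        = (‖L e0‖ ^ 2 + ‖L e1‖ ^ 2) / 2 := by
      rw [hLe0sq, hLe1sq, ← Finset.sum_add_distrib, ← Finset.sum_div]
      congr 1
      exact Finset.sum_congr rfl fun i _ => by ring
    rw [this]; linarith
  -- termwise: det ≤ half of sum of squares
  have hterm : ∀ i ∈ Finset.univ, a i * d i - b i * c i
      ≤ (a i ^ 2 + b i ^ 2 + c i ^ 2 + d i ^ 2) / 2 := by
    intro i _
    nlinarith [sq_nonneg (a i - d i), sq_nonneg (b i + c i)]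
  have hsum : ∑ i, (a i * d i - b i * c i)
      = ∑ i, (a i ^ 2 + b i ^ 2 + c i ^ 2 + d i ^ 2) / 2 := by
    have hlow : ‖L‖ ^ 2 = ∑ i, (a i * d i - b i * c i) := by
      rw [hL]; exact Finset.sum_congr rfl fun i _ => hdet i
    have h1 : ∑ i, (a i * d i - b i * c i)
        ≤ ∑ i, (a i ^ 2 + b i ^ 2 + c i ^ 2 + d i ^ 2) / 2 :=
      Finset.sum_le_sum hterm
    linarith [hub, hlow.symm.le, hlow.le]
  have heq : ∀ i ∈ Finset.univ, a i * d i - b i * c i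
      = (a i ^ 2 + b i ^ 2 + c i ^ 2 + d i ^ 2) / 2 :=
    (Finset.sum_eq_sum_iff_of_le hterm).mp hsum
  intro i
  have hi := heq i (Finset.mem_univ i)
  have hz : (a i - d i) ^ 2 + (b i + c i) ^ 2 = 0 := by linear_combination -2 * hi
  have hz1 : (a i - d i) ^ 2 = 0 ∧ (b i + c i) ^ 2 = 0 :=
    (add_eq_zero_iff_of_nonneg (sq_nonneg _) (sq_nonneg _)).mp hz
  have had : a i = d i := by
    have := pow_eq_zero_iff (n := 2) (by norm_num) |>.mp hz1.1
    linarith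
  have hbc : b i = -c i := by
    have := pow_eq_zero_iff (n := 2) (by norm_num) |>.mp hz1.2
    linarith
  refine ⟨Real.sqrt (a i ^ 2 + b i ^ 2), Real.sqrt_nonneg _, fun v => ?_⟩
  have hv : Li i v = v 0 • Li i e0 + v 1 • Li i e1 := by
    conv_lhs => rw [euclid_decomp v]
    simp [he0, he1]
  have h0 : Li i v 0 = v 0 * a i + v 1 * b i := by
    rw [hv]; simp [ha, hb]
  have h1 : Li i v 1 = v 0 * c i + v 1 * d i := by
    rw [hv]; simp [hc, hd]
  have hnv : ‖Li i v‖ ^ 2 = (a i ^ 2 + b i ^ 2) * ‖v‖ ^ 2 := by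
    rw [euclid_norm_sq (Li i v), euclid_norm_sq v, h0, h1, ← had, hbc]
    ring
  have hsq : ‖Li i v‖ = Real.sqrt ((a i ^ 2 + b i ^ 2) * ‖v‖ ^ 2) := by
    rw [← hnv, Real.sqrt_sq (norm_nonneg _)]
  rw [hsq, Real.sqrt_mul (by positivity), Real.sqrt_sq (norm_nonneg _)]
end

section
/- If F : Ω → ℂ^k satisfies ‖DF(z)‖² ≤ K Σ_{i=1}^k (|∂_z f_i(z)|² − |∂_{z̄} f_i(z)|²) at a point z of differentiability, then |∂_{z̄} F(z)| ≤ √((2K−1)/(2K+1)) |∂_z F(z)|. -/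
/-! By the parallelogram law, `|∂_z F|² + |∂_z̄ F|² = (|DF(1)|² + |DF(i)|²) / 2 ≤ ‖DF‖²`, while
`∑ᵢ (|∂_z fᵢ|² − |∂_z̄ fᵢ|²) = |∂_z F|² − |∂_z̄ F|²`. The hypothesis therefore gives
`a² + b² ≤ K (a² − b²)` for `a = |∂_z F|`, `b = |∂_z̄ F|`, and the claimed bound on `b / a` is
elementary algebra. -/

/-- Wirtinger derivative `∂_z` of a real-linear map `D = DF(z) : ℂ → ℂ^k`. -/
noncomputable def wirtingerZ {k : ℕ} (D : ℂ →L[ℝ] EuclideanSpace ℂ (Fin k)) :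
    EuclideanSpace ℂ (Fin k) :=
  (2 : ℂ)⁻¹ • (D 1 - Complex.I • D Complex.I)

/-- Wirtinger derivative `∂_z̄` of a real-linear map `D = DF(z) : ℂ → ℂ^k`. -/
noncomputable def wirtingerZbar {k : ℕ} (D : ℂ →L[ℝ] EuclideanSpace ℂ (Fin k)) :
    EuclideanSpace ℂ (Fin k) :=
  (2 : ℂ)⁻¹ • (D 1 + Complex.I • D Complex.I)

lemma le_sqrt_mul_of_sq_add_sq_le_mul_sq_sub_sq {K a b : ℝ} (hK : 0 ≤ K) (ha : 0 ≤ a)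
    (hb : 0 ≤ b) (h : a ^ 2 + b ^ 2 ≤ K * (a ^ 2 - b ^ 2)) :
    b ≤ Real.sqrt ((2 * K - 1) / (2 * K + 1)) * a := by
  have hsq : b ^ 2 ≤ (2 * K - 1) / (2 * K + 1) * a ^ 2 := by
    rw [div_mul_eq_mul_div, le_div_iff₀ (by linarith)]
    nlinarith [sq_nonneg a]
  calc b = Real.sqrt (b ^ 2) := (Real.sqrt_sq hb).symm
    _ ≤ Real.sqrt ((2 * K - 1) / (2 * K + 1) * a ^ 2) := Real.sqrt_le_sqrt hsq
    _ = Real.sqrt ((2 * K - 1) / (2 * K + 1)) * a := by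
      rw [Real.sqrt_mul' _ (sq_nonneg a), Real.sqrt_sq ha]

section Wirtinger

variable {k : ℕ}

lemma sum_norm_sq_sub_norm_sq (x y : EuclideanSpace ℂ (Fin k)) :
    ∑ i, (‖x i‖ ^ 2 - ‖y i‖ ^ 2) = ‖x‖ ^ 2 - ‖y‖ ^ 2 := by
  rw [Finset.sum_sub_distrib, EuclideanSpace.norm_sq_eq, EuclideanSpace.norm_sq_eq]

lemma norm_wirtingerZ_sq_add_norm_wirtingerZbar_sq (D : ℂ →L[ℝ] EuclideanSpace ℂ (Fin k)) :
    ‖wirtingerZ D‖ ^ 2 + ‖wirtingerZbar D‖ ^ 2 = (‖D 1‖ ^ 2 + ‖D Complex.I‖ ^ 2) / 2 := by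
  have hhalf : ‖(2 : ℂ)⁻¹‖ = 2⁻¹ := by norm_num
  have hrot : ‖Complex.I • D Complex.I‖ = ‖D Complex.I‖ := by
    rw [norm_smul, Complex.norm_I, one_mul]
  have hpar := parallelogram_law_with_norm ℂ (D 1) (Complex.I • D Complex.I)
  rw [wirtingerZ, wirtingerZbar, norm_smul, norm_smul, hhalf]
  rw [hrot] at hpar
  linear_combination (1 / 4 : ℝ) * hpar

lemma norm_wirtingerZ_sq_add_norm_wirtingerZbar_sq_le (D : ℂ →L[ℝ] EuclideanSpace ℂ (Fin k)) :
    ‖wirtingerZ D‖ ^ 2 + ‖wirtingerZbar D‖ ^ 2 ≤ ‖D‖ ^ 2 := by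
  have h1 : ‖D 1‖ ≤ ‖D‖ := by simpa using D.le_opNorm 1
  have hI : ‖D Complex.I‖ ≤ ‖D‖ := by simpa using D.le_opNorm Complex.I
  rw [norm_wirtingerZ_sq_add_norm_wirtingerZbar_sq]
  have h1' := pow_le_pow_left₀ (norm_nonneg _) h1 2
  have hI' := pow_le_pow_left₀ (norm_nonneg _) hI 2
  linarith

end Wirtinger

theorem symplectic_distortion_implies_dilatation_general (k : ℕ) (K : ℝ) (hK : 1 ≤ K)
    (F : ℂ → EuclideanSpace ℂ (Fin k)) (z : ℂ)
    (hdist : ‖fderiv ℝ F z‖ ^ 2 ≤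
      K * ∑ i, ((‖wirtingerZ (fderiv ℝ F z) i‖) ^ 2
        - (‖wirtingerZbar (fderiv ℝ F z) i‖) ^ 2)) :
    ‖wirtingerZbar (fderiv ℝ F z)‖ ≤
      Real.sqrt ((2 * K - 1) / (2 * K + 1)) * ‖wirtingerZ (fderiv ℝ F z)‖ := by
  rw [sum_norm_sq_sub_norm_sq] at hdist
  exact le_sqrt_mul_of_sq_add_sq_le_mul_sq_sub_sq (by linarith) (norm_nonneg _) (norm_nonneg _)
    ((norm_wirtingerZ_sq_add_norm_wirtingerZbar_sq_le _).trans hdist)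

/-- If `F : Ω → ℂ^k` satisfies `‖DF(z)‖² ≤ K ∑ᵢ (|∂_z fᵢ(z)|² − |∂_z̄ fᵢ(z)|²)` at a point `z`
of differentiability, then `|∂_z̄ F(z)| ≤ √((2K−1)/(2K+1)) |∂_z F(z)|`. -/
theorem symplectic_distortion_implies_dilatation (k : ℕ) (K : ℝ) (hK : 1 ≤ K)
    (Ω : Set ℂ) (F : ℂ → EuclideanSpace ℂ (Fin k)) (z : ℂ) (hz : z ∈ Ω)
    (hdiff : DifferentiableAt ℝ F z)
    (hdist : ‖fderiv ℝ F z‖ ^ 2 ≤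
      K * ∑ i, ((‖wirtingerZ (fderiv ℝ F z) i‖) ^ 2
        - (‖wirtingerZbar (fderiv ℝ F z) i‖) ^ 2)) :
    ‖wirtingerZbar (fderiv ℝ F z)‖ ≤
      Real.sqrt ((2 * K - 1) / (2 * K + 1)) * ‖wirtingerZ (fderiv ℝ F z)‖ :=
  symplectic_distortion_implies_dilatation_general k K hK F z hdist
end

section
/- Let n ≥ 3, k ≥ 1, 0 < ε < 1/(100k), and let L : ℝⁿ → (ℝⁿ)^k be linear with ‖L‖ⁿ ≤ (1+ε) Σ_{i=1}^k det L_i. If the index i_0 with component L' = (L_i)_{i≠i_0} satisfies ‖L_{i_0}‖ ≥ ‖L‖/(1+ε) and ‖L_{i_0}‖ = |L_{i_0}(e_1)|, then |L'(e_1)|² ≤ 3ε ‖L_{i_0}‖², where L'(e_1) = (L_i(e_1))_{i≠i_0}. -/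
/-- For `n ≥ 3`, `k ≥ 1`, `0 < ε < 1/(100k)` and `L : ℝⁿ → (ℝⁿ)^k` linear with
`‖L‖ⁿ ≤ (1+ε) ∑ᵢ det Lᵢ`: if the index `i₀` satisfies `‖L_{i₀}‖ ≥ ‖L‖/(1+ε)` and
`‖L_{i₀}‖ = |L_{i₀}(e₁)|`, then `|L'(e₁)|² = ∑_{i ≠ i₀} |Lᵢ(e₁)|² ≤ 3ε ‖L_{i₀}‖²`. -/
theorem small_components_at_basis_vector (n k : ℕ) (hn : 3 ≤ n) (hk : 1 ≤ k)
    (ε : ℝ) (hε : 0 < ε) (hε' : ε < 1 / (100 * k))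
    (L : EuclideanSpace ℝ (Fin n) →L[ℝ]
        PiLp 2 (fun _ : Fin k => EuclideanSpace ℝ (Fin n)))
    (Li : Fin k → (EuclideanSpace ℝ (Fin n) →L[ℝ] EuclideanSpace ℝ (Fin n)))
    (hLi : ∀ i v, Li i v = L v i)
    (hL : ‖L‖ ^ n ≤ (1 + ε) * ∑ i, LinearMap.det
        ((Li i : EuclideanSpace ℝ (Fin n) →ₗ[ℝ] EuclideanSpace ℝ (Fin n))))
    (i₀ : Fin k) (hn₀ : ‖L‖ / (1 + ε) ≤ ‖Li i₀‖)
    (he₁ : ‖Li i₀‖ = ‖Li i₀ (EuclideanSpace.single (⟨0, by omega⟩ : Fin n) 1)‖) :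
    ∑ i ∈ Finset.univ.erase i₀, ‖Li i (EuclideanSpace.single (⟨0, by omega⟩ : Fin n) 1)‖ ^ 2
      ≤ 3 * ε * ‖Li i₀‖ ^ 2 := by

  set e₁ := (EuclideanSpace.single (⟨0, by omega⟩ : Fin n) 1 : EuclideanSpace ℝ (Fin n)) with he
  have hnorm_e : ‖e₁‖ = 1 := by
    rw [he, EuclideanSpace.norm_single]; norm_num
  have hLe : ‖L e₁‖ ≤ ‖L‖ := by
    calc ‖L e₁‖ ≤ ‖L‖ * ‖e₁‖ := L.le_opNorm e₁
    _ = ‖L‖ := by rw [hnorm_e, mul_one]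
  have hsq : ‖L e₁‖ ^ 2 = ∑ i, ‖Li i e₁‖ ^ 2 := by
    rw [PiLp.norm_sq_eq_of_L2]
    exact Finset.sum_congr rfl fun i _ => by rw [hLi]
  have hsplit : ∑ i, ‖Li i e₁‖ ^ 2
      = ‖Li i₀ e₁‖ ^ 2 + ∑ i ∈ Finset.univ.erase i₀, ‖Li i e₁‖ ^ 2 :=
    (Finset.add_sum_erase _ _ (Finset.mem_univ i₀)).symm
  have hS : ∑ i ∈ Finset.univ.erase i₀, ‖Li i e₁‖ ^ 2 ≤ ‖L‖ ^ 2 - ‖Li i₀‖ ^ 2 := by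
    have h1 : ‖L e₁‖ ^ 2 ≤ ‖L‖ ^ 2 := by
      apply pow_le_pow_left₀ (norm_nonneg _) hLe
    have h2 : ‖(Li i₀) e₁‖ ^ 2 = ‖Li i₀‖ ^ 2 := by rw [he₁]
    linarith [hsq, hsplit, h1, h2]
  have hε1 : (0:ℝ) < 1 + ε := by linarith
  have hLle : ‖L‖ ≤ (1 + ε) * ‖Li i₀‖ := by
    rw [div_le_iff₀ hε1] at hn₀; linarith [hn₀]
  have hεsmall : ε ≤ 1 := by
    have : (1:ℝ) ≤ k := by exact_mod_cast hk
    have : 1 / (100 * (k:ℝ)) ≤ 1 := by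
      rw [div_le_one (by linarith)]; linarith
    linarith
  have hLi0 : 0 ≤ ‖Li i₀‖ := norm_nonneg _
  have hL0 : 0 ≤ ‖L‖ := norm_nonneg _
  have hL2 : ‖L‖ ^ 2 ≤ (1 + ε) ^ 2 * ‖Li i₀‖ ^ 2 := by nlinarith [hLle, hL0, hLi0]
  have key : 0 ≤ ε * (1 - ε) * ‖Li i₀‖ ^ 2 :=
    mul_nonneg (mul_nonneg hε.le (by linarith)) (sq_nonneg _)
  nlinarith [hS, hL2, key]
end

section
/- Let n ≥ 2, k ≥ 1, and 0 < ν < 2^{-n}. Let L : ℝⁿ → (ℝⁿ)^k be a linear map with Σ_{i=1}^k det L_i = ‖L‖ⁿ, and let R : ℝⁿ → (ℝⁿ)^k be a linear map with |R(e_j) − L(e_j)| ≤ (ν/√n) ‖L‖ for j = 1,...,n. Then ‖R‖ ≤ (1+ν)‖L‖ and ‖R‖ⁿ ≤ ((1+ν)ⁿ / (1 − 2ⁿν)) Σ_{i=1}^k det R_i. -/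
/-!
For the volume form `ω` of `ℝⁿ`, the map `x ↦ ∑ᵢ ω(x₁ i, …, xₙ i)` on `n`-tuples of vectors of
`(ℝⁿ)^k` is multilinear, and Hadamard's inequality on each summand together with Cauchy–Schwarz on
two of the columns bounds it by `∏ⱼ ‖xⱼ‖` as soon as `n ≥ 2`. At the columns `L eⱼ` and `R eⱼ` it
takes the values `∑ det Lᵢ` and `∑ det Rᵢ`, so the telescoping estimate for multilinear maps gives
`∑ det Lᵢ - ∑ det Rᵢ ≤ n ((1 + ν)‖L‖)ⁿ⁻¹ (ν/√n)‖L‖ ≤ 2ⁿ ν ‖L‖ⁿ`. The bound `‖R - L‖ ≤ ν ‖L‖`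
comes from the column estimates, since `∑ⱼ |xⱼ| ≤ √n ‖x‖`.
-/

open Finset

theorem PiLp.sum_prod_norm_apply_le_prod_norm {ι F : Type*} [Fintype ι] [SeminormedAddCommGroup F]
    {n : ℕ} (hn : 2 ≤ n) (x : Fin n → PiLp 2 (fun _ : ι => F)) :
    ∑ i, ∏ j, ‖x j i‖ ≤ ∏ j, ‖x j‖ := by
  obtain ⟨m, rfl⟩ : ∃ m, n = m + 2 := ⟨n - 2, by omega⟩
  simp only [Fin.prod_univ_succ]
  have hCS : ∑ i, ‖x 0 i‖ * ‖x 1 i‖ ≤ ‖x 0‖ * ‖x 1‖ := by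
    simpa only [PiLp.norm_eq_of_L2] using Real.sum_mul_le_sqrt_mul_sqrt _ _ _
  calc ∑ i, ‖x 0 i‖ * (‖x 1 i‖ * ∏ j : Fin m, ‖x j.succ.succ i‖)
      ≤ ∑ i, ‖x 0 i‖ * (‖x 1 i‖ * ∏ j : Fin m, ‖x j.succ.succ‖) := by
        gcongr with i _ j
        exact PiLp.norm_apply_le _ _
    _ ≤ ‖x 0‖ * ‖x 1‖ * ∏ j : Fin m, ‖x j.succ.succ‖ := by
        simp only [← mul_assoc, ← sum_mul]
        exact mul_le_mul_of_nonneg_right hCS (by positivity)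
    _ = _ := by simp only [Fin.succ_zero_eq_one, mul_assoc]

theorem EuclideanSpace.sum_abs_le_sqrt_card_mul_norm {ι : Type*} [Fintype ι]
    (x : EuclideanSpace ℝ ι) : ∑ j, |x j| ≤ √(Fintype.card ι) * ‖x‖ := by
  simpa [EuclideanSpace.norm_eq] using Real.sum_mul_le_sqrt_mul_sqrt univ (fun _ => 1) (|x ·|)

theorem ContinuousLinearMap.opNorm_le_sqrt_card_mul_of_norm_single_le {ι F : Type*} [Fintype ι]
    [DecidableEq ι] [SeminormedAddCommGroup F] [NormedSpace ℝ F] (T : EuclideanSpace ℝ ι →L[ℝ] F)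
    {C : ℝ} (hC : 0 ≤ C) (h : ∀ j, ‖T (EuclideanSpace.single j 1)‖ ≤ C) :
    ‖T‖ ≤ √(Fintype.card ι) * C := by
  refine T.opNorm_le_bound (by positivity) fun x => ?_
  have hx : x = ∑ j, x j • EuclideanSpace.single j 1 := by
    simpa [EuclideanSpace.basisFun_apply] using ((EuclideanSpace.basisFun ι ℝ).sum_repr x).symm
  calc ‖T x‖ ≤ ∑ j, ‖x j • T (EuclideanSpace.single j 1)‖ := by
        conv_lhs => rw [hx]
        simpa only [map_sum, map_smul] using norm_sum_le _ _
    _ ≤ ∑ j, |x j| * C := by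
        gcongr with j
        rw [norm_smul, Real.norm_eq_abs]
        gcongr
        exact h j
    _ ≤ √(Fintype.card ι) * C * ‖x‖ := by
        rw [← sum_mul, mul_right_comm]
        gcongr
        exact EuclideanSpace.sum_abs_le_sqrt_card_mul_norm x

theorem ContinuousLinearMap.opNorm_le_one_add_mul_of_norm_sub_single_le {ι F : Type*}
    [Fintype ι] [DecidableEq ι] [SeminormedAddCommGroup F] [NormedSpace ℝ F]
    {T S : EuclideanSpace ℝ ι →L[ℝ] F} {ν : ℝ} (hν : 0 ≤ ν)
    (h : ∀ j, ‖T (EuclideanSpace.single j 1) - S (EuclideanSpace.single j 1)‖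
      ≤ ν / √(Fintype.card ι) * ‖S‖) :
    ‖T‖ ≤ (1 + ν) * ‖S‖ := by
  have hTS : ‖T - S‖ ≤ ν * ‖S‖ := by
    refine ((T - S).opNorm_le_sqrt_card_mul_of_norm_single_le (by positivity) h).trans ?_
    rcases (Fintype.card ι).eq_zero_or_pos with h0 | h0
    · simpa [h0] using mul_nonneg hν (norm_nonneg S)
    · rw [← mul_assoc, mul_div_cancel₀ _ (by positivity)]
  linarith [norm_le_norm_add_norm_sub' T S]

namespace Orientation

variable {E : Type*} [NormedAddCommGroup E] [InnerProductSpace ℝ E] {n : ℕ}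
  [Fact (Module.finrank ℝ E = n)] (o : Orientation ℝ E (Fin n)) (ι : Type*) [Fintype ι]

noncomputable def sumVolumeForm : MultilinearMap ℝ (fun _ : Fin n => PiLp 2 (fun _ : ι => E)) ℝ :=
  ∑ i, o.volumeForm.toMultilinearMap.compLinearMap fun _ => PiLp.projₗ 2 (fun _ : ι => E) i

variable {ι}

theorem sumVolumeForm_apply (x : Fin n → PiLp 2 (fun _ : ι => E)) :
    o.sumVolumeForm ι x = ∑ i, o.volumeForm (fun j => x j i) := by
  simp [sumVolumeForm, _root_.sum_apply]

theorem abs_sumVolumeForm_apply_le (hn : 2 ≤ n) (x : Fin n → PiLp 2 (fun _ : ι => E)) :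
    |o.sumVolumeForm ι x| ≤ ∏ j, ‖x j‖ :=
  calc |o.sumVolumeForm ι x| ≤ ∑ i, |o.volumeForm (fun j => x j i)| := by
        rw [sumVolumeForm_apply]; exact abs_sum_le_sum_abs _ _
    _ ≤ ∑ i, ∏ j, ‖x j i‖ := by gcongr with i; exact o.abs_volumeForm_apply_le _
    _ ≤ ∏ j, ‖x j‖ := PiLp.sum_prod_norm_apply_le_prod_norm hn x

theorem abs_sumVolumeForm_sub_le (hn : 2 ≤ n) {x y : Fin n → PiLp 2 (fun _ : ι => E)} {M δ : ℝ}
    (hx : ∀ j, ‖x j‖ ≤ M) (hy : ∀ j, ‖y j‖ ≤ M) (hxy : ∀ j, ‖x j - y j‖ ≤ δ) :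
    |o.sumVolumeForm ι x - o.sumVolumeForm ι y| ≤ n * M ^ (n - 1) * δ := by
  have hM : 0 ≤ M := (norm_nonneg _).trans (hx ⟨0, by omega⟩)
  have hδ : 0 ≤ δ := (norm_nonneg _).trans (hxy ⟨0, by omega⟩)
  have h := (o.sumVolumeForm ι).norm_image_sub_le_of_bound zero_le_one
    (fun m => (one_mul (∏ j, ‖m j‖)).symm ▸ o.abs_sumVolumeForm_apply_le hn m) x y
  rw [one_mul, Fintype.card_fin] at h
  refine h.trans ?_
  gcongr
  · exact max_le ((pi_norm_le_iff_of_nonneg hM).2 hx) ((pi_norm_le_iff_of_nonneg hM).2 hy)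
  · exact (pi_norm_le_iff_of_nonneg hδ).2 hxy

end Orientation

theorem OrthonormalBasis.sumVolumeForm_apply_eq_sum_det {E ι : Type*} [NormedAddCommGroup E]
    [InnerProductSpace ℝ E] [Fintype ι] {n : ℕ} [Fact (Module.finrank ℝ E = n)]
    (b : OrthonormalBasis (Fin n) ℝ E) {T : E →ₗ[ℝ] PiLp 2 (fun _ : ι => E)}
    {Ti : ι → E →ₗ[ℝ] E} (hTi : ∀ i v, Ti i v = T v i) :
    b.toBasis.orientation.sumVolumeForm ι (fun j => T (b j)) = ∑ i, LinearMap.det (Ti i) := by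
  rw [Orientation.sumVolumeForm_apply, b.toBasis.orientation.volumeForm_robust b rfl]
  refine sum_congr rfl fun i _ => ?_
  rw [← mul_one (LinearMap.det (Ti i)), ← b.toBasis.det_self, ← b.toBasis.det_comp]
  congr 1
  funext j
  simp [hTi]

theorem sqrt_mul_one_add_pow_le_two_pow {ν : ℝ} (hν₀ : 0 ≤ ν) (hν : ν ≤ 1 / 4) (n : ℕ) :
    √n * (1 + ν) ^ (n - 1) ≤ 2 ^ n :=
  calc √n * (1 + ν) ^ (n - 1) ≤ √2 ^ n * (5 / 4) ^ n := by
        gcongr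
        · refine Real.sqrt_le_iff.2 ⟨by positivity, ?_⟩
          rw [← pow_mul, mul_comm, pow_mul, Real.sq_sqrt zero_le_two]
          exact_mod_cast n.lt_two_pow_self.le
        · calc (1 + ν) ^ (n - 1) ≤ (5 / 4) ^ (n - 1) := by gcongr; linarith
            _ ≤ (5 / 4) ^ n := pow_le_pow_right₀ (by norm_num) (Nat.sub_le n 1)
    _ = (√2 * (5 / 4)) ^ n := (mul_pow _ _ _).symm
    _ ≤ 2 ^ n := by
        gcongr
        nlinarith [Real.sq_sqrt zero_le_two, Real.sqrt_nonneg 2]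

theorem natCast_mul_one_add_mul_pow_mul_le {ν : ℝ} (hν₀ : 0 ≤ ν) (hν : ν ≤ 1 / 4) {a : ℝ}
    (ha : 0 ≤ a) (n : ℕ) : n * ((1 + ν) * a) ^ (n - 1) * (ν / √n * a) ≤ 2 ^ n * ν * a ^ n := by
  rcases n.eq_zero_or_pos with rfl | hn
  · simpa using hν₀
  calc n * ((1 + ν) * a) ^ (n - 1) * (ν / √n * a) = √n * (1 + ν) ^ (n - 1) * ν * a ^ n := by
        rw [mul_pow, ← pow_sub_one_mul hn.ne' a]
        field_simp
        rw [Real.sq_sqrt n.cast_nonneg]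
        ring
    _ ≤ 2 ^ n * ν * a ^ n := by
        gcongr
        exact sqrt_mul_one_add_pow_le_two_pow hν₀ hν n

theorem pow_le_one_add_pow_div_mul_of_sub_le {r l S ν c : ℝ} (n : ℕ) (hr₀ : 0 ≤ r)
    (hr : r ≤ (1 + ν) * l) (hν : 0 ≤ ν) (hc : c < 1) (hS : l ^ n - S ≤ c * l ^ n) :
    r ^ n ≤ (1 + ν) ^ n / (1 - c) * S :=
  calc r ^ n ≤ (1 + ν) ^ n * l ^ n := by rw [← mul_pow]; gcongr
    _ ≤ (1 + ν) ^ n / (1 - c) * S := by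
      rw [div_mul_eq_mul_div, le_div_iff₀ (by linarith), mul_assoc]
      exact mul_le_mul_of_nonneg_left (by linarith) (by positivity)

theorem conformal_vertices_distortion_general (n k : ℕ) (hn : 2 ≤ n)
    (ν : ℝ) (hν : 0 < ν) (hν' : ν < 1 / 2 ^ n)
    (L R : EuclideanSpace ℝ (Fin n) →L[ℝ]
        PiLp 2 (fun _ : Fin k => EuclideanSpace ℝ (Fin n)))
    (Li Ri : Fin k → (EuclideanSpace ℝ (Fin n) →L[ℝ] EuclideanSpace ℝ (Fin n)))
    (hLi : ∀ i v, Li i v = L v i) (hRi : ∀ i v, Ri i v = R v i)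
    (hL : ∑ i, LinearMap.det
        ((Li i : EuclideanSpace ℝ (Fin n) →ₗ[ℝ] EuclideanSpace ℝ (Fin n))) = ‖L‖ ^ n)
    (hclose : ∀ j : Fin n, ‖R (EuclideanSpace.single j 1) - L (EuclideanSpace.single j 1)‖
        ≤ ν / Real.sqrt n * ‖L‖) :
    ‖R‖ ≤ (1 + ν) * ‖L‖ ∧
    ‖R‖ ^ n ≤ (1 + ν) ^ n / (1 - 2 ^ n * ν) * ∑ i, LinearMap.det
        ((Ri i : EuclideanSpace ℝ (Fin n) →ₗ[ℝ] EuclideanSpace ℝ (Fin n))) := by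
  have : Fact (Module.finrank ℝ (EuclideanSpace ℝ (Fin n)) = n) := ⟨finrank_euclideanSpace_fin⟩
  have hR : ‖R‖ ≤ (1 + ν) * ‖L‖ :=
    ContinuousLinearMap.opNorm_le_one_add_mul_of_norm_sub_single_le hν.le (by simpa using hclose)
  refine ⟨hR, ?_⟩
  have h2ν : 2 ^ n * ν < 1 := by
    have h := (lt_div_iff₀ (by positivity)).1 hν'
    linarith
  have hν4 : ν ≤ 1 / 4 := by
    have h4 : (2 : ℝ) ^ 2 ≤ 2 ^ n := pow_le_pow_right₀ one_le_two hn
    nlinarith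
  set b := EuclideanSpace.basisFun (Fin n) ℝ
  set S := ∑ i, LinearMap.det (Ri i : EuclideanSpace ℝ (Fin n) →ₗ[ℝ] EuclideanSpace ℝ (Fin n))
  set ω := b.toBasis.orientation.sumVolumeForm (Fin k)
  have hLω : ω (fun j => L (b j)) = ‖L‖ ^ n :=
    (b.sumVolumeForm_apply_eq_sum_det (T := L.toLinearMap) hLi).trans hL
  have hRω : ω (fun j => R (b j)) = S := b.sumVolumeForm_apply_eq_sum_det (T := R.toLinearMap) hRi
  have hgap : ‖L‖ ^ n - S ≤ 2 ^ n * ν * ‖L‖ ^ n :=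
    calc ‖L‖ ^ n - S ≤ |ω (fun j => L (b j)) - ω (fun j => R (b j))| := by
          rw [hLω, hRω]
          exact le_abs_self _
      _ ≤ n * ((1 + ν) * ‖L‖) ^ (n - 1) * (ν / √n * ‖L‖) := by
          refine b.toBasis.orientation.abs_sumVolumeForm_sub_le hn (fun j => ?_) (fun j => ?_)
            (fun j => ?_)
          · refine (L.unit_le_opNorm _ (b.orthonormal.1 j).le).trans ?_
            nlinarith [norm_nonneg L]
          · exact (R.unit_le_opNorm _ (b.orthonormal.1 j).le).trans hR
          · rw [norm_sub_rev]
            simpa [b, EuclideanSpace.basisFun_apply] using hclose j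
      _ ≤ 2 ^ n * ν * ‖L‖ ^ n := natCast_mul_one_add_mul_pow_mul_le hν.le hν4 (norm_nonneg L) n
  exact pow_le_one_add_pow_div_mul_of_sub_le n (norm_nonneg R) hR hν.le h2ν hgap

/-- For `n ≥ 2`, `k ≥ 1`, `0 < ν < 2⁻ⁿ`: if `L : ℝⁿ → (ℝⁿ)^k` is linear with
`∑ᵢ det Lᵢ = ‖L‖ⁿ` and `R` is linear with `|R(eⱼ) − L(eⱼ)| ≤ (ν/√n)‖L‖` for all `j`, then
`‖R‖ ≤ (1+ν)‖L‖` and `‖R‖ⁿ ≤ ((1+ν)ⁿ/(1 − 2ⁿν)) ∑ᵢ det Rᵢ`. -/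
theorem conformal_vertices_distortion (n k : ℕ) (hn : 2 ≤ n) (hk : 1 ≤ k)
    (ν : ℝ) (hν : 0 < ν) (hν' : ν < 1 / 2 ^ n)
    (L R : EuclideanSpace ℝ (Fin n) →L[ℝ]
        PiLp 2 (fun _ : Fin k => EuclideanSpace ℝ (Fin n)))
    (Li Ri : Fin k → (EuclideanSpace ℝ (Fin n) →L[ℝ] EuclideanSpace ℝ (Fin n)))
    (hLi : ∀ i v, Li i v = L v i) (hRi : ∀ i v, Ri i v = R v i)
    (hL : ∑ i, LinearMap.det
        ((Li i : EuclideanSpace ℝ (Fin n) →ₗ[ℝ] EuclideanSpace ℝ (Fin n))) = ‖L‖ ^ n)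
    (hclose : ∀ j : Fin n, ‖R (EuclideanSpace.single j 1) - L (EuclideanSpace.single j 1)‖
        ≤ ν / Real.sqrt n * ‖L‖) :
    ‖R‖ ≤ (1 + ν) * ‖L‖ ∧
    ‖R‖ ^ n ≤ (1 + ν) ^ n / (1 - 2 ^ n * ν) * ∑ i, LinearMap.det
        ((Ri i : EuclideanSpace ℝ (Fin n) →ₗ[ℝ] EuclideanSpace ℝ (Fin n))) :=
  conformal_vertices_distortion_general n k hn ν hν hν' L R Li Ri hLi hRi hL hclose
end

section
/- Let n ≥ 3 and let φ : Bⁿ → ℝⁿ be the restriction of a Möbius transformation of Sⁿ with φ(Bⁿ) ⊂ ℝⁿ. Then (1/3)‖Dφ(0)‖ ≤ sup_{|x| ≤ 1/2} |φ(x) − φ(0)| ≤ ‖Dφ(0)‖. -/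
/-- `φ` is, on the open unit ball, the restriction of a Möbius transformation of `Sⁿ` mapping
the ball into `ℝⁿ`: either an affine conformal map `y ↦ b + c A(y − p)` or an inversion
`y ↦ b + (c/|y − p|²) A(y − p)` with pole `p` outside the unit ball. -/
def IsMoebiusOnBall {n : ℕ} (φ : EuclideanSpace ℝ (Fin n) → EuclideanSpace ℝ (Fin n)) : Prop :=
  (∃ (b p : EuclideanSpace ℝ (Fin n)) (c : ℝ)
      (A : EuclideanSpace ℝ (Fin n) →ₗᵢ[ℝ] EuclideanSpace ℝ (Fin n)),
      0 < c ∧ ∀ y, ‖y‖ < 1 → φ y = b + c • A (y - p)) ∨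
  (∃ (b p : EuclideanSpace ℝ (Fin n)) (c : ℝ)
      (A : EuclideanSpace ℝ (Fin n) →ₗᵢ[ℝ] EuclideanSpace ℝ (Fin n)),
      0 < c ∧ 1 ≤ ‖p‖ ∧ ∀ y, ‖y‖ < 1 → φ y = b + (c / ‖y - p‖ ^ 2) • A (y - p))

/-! Both kinds of Möbius maps have the form `y ↦ b + c A(ψ y − p)` with `ψ` the identity or the
inversion in the unit sphere about `p`, and postcomposing with this similarity scales both
`‖Dφ(0)‖` and `|φ x − φ 0|` by `c`. For the identity these are `1` and `|x|`. For the inversion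
they are `1/|p|²` and `|x|/(|x − p||p|)`: as `|p| ≥ 1`, `|x||p| ≤ |p| − |x| ≤ |x − p|` when
`|x| ≤ 1/2`, and at `x = p/(2|p|)` the ratio is `|p|/(2|p| − 1) ≥ 1/2`. -/

open EuclideanGeometry Topology

section NormedSpace

variable {E : Type*} [NormedAddCommGroup E] [NormedSpace ℝ E]

def HalfBallBounds (φ : E → E) : Prop :=
  (∀ x, ‖x‖ ≤ 1 / 2 → ‖φ x - φ 0‖ ≤ ‖fderiv ℝ φ 0‖) ∧
    ∃ x, ‖x‖ ≤ 1 / 2 ∧ ‖fderiv ℝ φ 0‖ / 2 ≤ ‖φ x - φ 0‖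

theorem halfBallBounds_id [Nontrivial E] : HalfBallBounds (id : E → E) := by
  obtain ⟨x₀, hx₀⟩ := exists_norm_eq E (by norm_num : (0 : ℝ) ≤ 1 / 2)
  simp only [HalfBallBounds, fderiv_id, ContinuousLinearMap.norm_id, id, sub_zero]
  exact ⟨fun x hx => hx.trans (by norm_num), x₀, hx₀.le, by norm_num [hx₀]⟩

variable {φ ψ : E → E} {b p : E} {c : ℝ} {A : E →ₗᵢ[ℝ] E}

theorem norm_fderiv_zero_of_eqOn_ball_affine_comp (hc : 0 ≤ c) (hψ : DifferentiableAt ℝ ψ 0)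
    (hφ : ∀ y, ‖y‖ < 1 → φ y = b + c • A (ψ y - p)) :
    ‖fderiv ℝ φ 0‖ = c * ‖fderiv ℝ ψ 0‖ := by
  have hloc : φ =ᶠ[𝓝 0] fun y => b + (c • A.toContinuousLinearMap) (ψ y - p) := by
    filter_upwards [Metric.ball_mem_nhds (0 : E) one_pos] with y hy
    simpa using hφ y (mem_ball_zero_iff.mp hy)
  have hD : HasFDerivAt φ ((c • A.toContinuousLinearMap).comp (fderiv ℝ ψ 0)) 0 :=
    (((c • A.toContinuousLinearMap).hasFDerivAt.comp 0
      (hψ.hasFDerivAt.sub_const p)).const_add b).congr_of_eventuallyEq hloc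
  rw [hD.fderiv, ContinuousLinearMap.smul_comp, norm_smul, A.norm_toContinuousLinearMap_comp,
    Real.norm_of_nonneg hc]

theorem norm_sub_zero_of_eqOn_ball_affine_comp (hc : 0 ≤ c)
    (hφ : ∀ y, ‖y‖ < 1 → φ y = b + c • A (ψ y - p)) {x : E} (hx : ‖x‖ < 1) :
    ‖φ x - φ 0‖ = c * ‖ψ x - ψ 0‖ := by
  rw [hφ x hx, hφ 0 (by simp), add_sub_add_left_eq_sub, ← smul_sub, ← map_sub,
    sub_sub_sub_cancel_right, norm_smul, A.norm_map, Real.norm_of_nonneg hc]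

theorem HalfBallBounds.affine_comp (h : HalfBallBounds ψ) (hc : 0 ≤ c)
    (hψ : DifferentiableAt ℝ ψ 0) (hφ : ∀ y, ‖y‖ < 1 → φ y = b + c • A (ψ y - p)) :
    HalfBallBounds φ := by
  obtain ⟨hle, x₀, hx₀, hlow⟩ := h
  have hball : ∀ {x : E}, ‖x‖ ≤ 1 / 2 → ‖x‖ < 1 := fun hx => hx.trans_lt (by norm_num)
  rw [HalfBallBounds, norm_fderiv_zero_of_eqOn_ball_affine_comp hc hψ hφ]
  refine ⟨fun x hx => ?_, x₀, hx₀, ?_⟩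
  · rw [norm_sub_zero_of_eqOn_ball_affine_comp hc hφ (hball hx)]
    exact mul_le_mul_of_nonneg_left (hle x hx) hc
  · rw [norm_sub_zero_of_eqOn_ball_affine_comp hc hφ (hball hx₀), mul_div_assoc]
    exact mul_le_mul_of_nonneg_left hlow hc

end NormedSpace

section InnerProductSpace

variable {F : Type*} [NormedAddCommGroup F] [InnerProductSpace ℝ F] {p : F}

theorem norm_fderiv_inversion_zero (hp : p ≠ 0) :
    ‖fderiv ℝ (inversion p 1) 0‖ = 1 / ‖p‖ ^ 2 := by
  have : Nontrivial F := ⟨⟨p, 0, hp⟩⟩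
  rw [(hasFDerivAt_inversion (Ne.symm hp)).fderiv, norm_smul]
  simp [dist_eq_norm]

theorem norm_inversion_sub_inversion_zero (hp : p ≠ 0) {x : F} (hx : x ≠ p) :
    ‖inversion p 1 x - inversion p 1 0‖ = ‖x‖ / (‖x - p‖ * ‖p‖) := by
  rw [← dist_eq_norm, dist_inversion_inversion hx (Ne.symm hp)]
  simp only [one_pow, dist_eq_norm, zero_sub, norm_neg, one_div, mul_inv_rev, sub_zero]
  ring

theorem halfBallBounds_inversion (hp : 1 ≤ ‖p‖) : HalfBallBounds (inversion p 1) := by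
  have hpos : 0 < ‖p‖ := one_pos.trans_le hp
  have hp0 : p ≠ 0 := norm_pos_iff.mp hpos
  have hne : ∀ {x : F}, ‖x‖ ≤ 1 / 2 → x ≠ p := by rintro x hx rfl; linarith
  rw [HalfBallBounds, norm_fderiv_inversion_zero hp0]
  set x₀ := (2 * ‖p‖)⁻¹ • p
  have hx₀ : ‖x₀‖ = 1 / 2 := by
    rw [norm_smul, norm_inv, norm_mul, Real.norm_two, norm_norm]
    field_simp
  have hx₀p : ‖x₀ - p‖ = ‖p‖ - 1 / 2 := by
    have hle : (2 * ‖p‖)⁻¹ ≤ 1 := inv_le_one_of_one_le₀ (by linarith)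
    rw [show x₀ - p = -((1 - (2 * ‖p‖)⁻¹) • p) by simp [x₀, sub_smul], norm_neg, norm_smul,
      Real.norm_of_nonneg (by linarith)]
    field_simp
  refine ⟨fun x hx => ?_, x₀, hx₀.le, ?_⟩
  · have hxp : ‖x‖ * ‖p‖ ≤ ‖x - p‖ := calc
      ‖x‖ * ‖p‖ ≤ ‖p‖ - ‖x‖ := by nlinarith [norm_nonneg x]
      _ ≤ ‖x - p‖ := by simpa only [norm_sub_rev p x] using norm_sub_norm_le p x
    rw [norm_inversion_sub_inversion_zero hp0 (hne hx),
      div_le_div_iff₀ (mul_pos (norm_sub_pos_iff.mpr (hne hx)) hpos) (by positivity)]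
    nlinarith [mul_le_mul_of_nonneg_right hxp hpos.le]
  · rw [norm_inversion_sub_inversion_zero hp0 (hne hx₀.le), hx₀, hx₀p]
    have : 0 < ‖p‖ - 1 / 2 := by linarith
    calc 1 / ‖p‖ ^ 2 / 2 = 1 / 2 / (‖p‖ * ‖p‖) := by ring
      _ ≤ 1 / 2 / ((‖p‖ - 1 / 2) * ‖p‖) := by gcongr; linarith

theorem smul_div_norm_sq_eq_smul_inversion_sub (c : ℝ) (A : F →ₗᵢ[ℝ] F) (p y : F) :
    (c / ‖y - p‖ ^ 2) • A (y - p) = c • A (inversion p 1 y - p) := by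
  rw [← vsub_eq_sub (inversion p 1 y), inversion_vsub_center, map_smul, smul_smul, vsub_eq_sub,
    dist_eq_norm]
  congr 2
  ring

end InnerProductSpace

/-- For `n ≥ 3` and `φ : Bⁿ → ℝⁿ` the restriction of a Möbius transformation of `Sⁿ`,
`(1/3)‖Dφ(0)‖ ≤ sup_{|x| ≤ 1/2} |φ(x) − φ(0)| ≤ ‖Dφ(0)‖`. -/
theorem moebius_derivative_bounds (n : ℕ) (hn : 3 ≤ n)
    (φ : EuclideanSpace ℝ (Fin n) → EuclideanSpace ℝ (Fin n))
    (hφ : IsMoebiusOnBall φ) :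
    (∀ x, ‖x‖ ≤ 1 / 2 → ‖φ x - φ 0‖ ≤ ‖fderiv ℝ φ 0‖) ∧
    (1 / 3 : ℝ) * ‖fderiv ℝ φ 0‖ ≤
      sSup {r : ℝ | ∃ x, ‖x‖ ≤ 1 / 2 ∧ r = ‖φ x - φ 0‖} := by
  have : Nonempty (Fin n) := ⟨⟨0, by omega⟩⟩
  obtain ⟨hle, x₀, hx₀, hlow⟩ : HalfBallBounds φ := by
    rcases hφ with ⟨b, p, c, A, hc, hφ⟩ | ⟨b, p, c, A, hc, hp, hφ⟩
    · exact halfBallBounds_id.affine_comp hc.le differentiableAt_id hφ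
    · have hp0 : (0 : EuclideanSpace ℝ (Fin n)) ≠ p := by rintro rfl; norm_num at hp
      have hφ' : ∀ y, ‖y‖ < 1 → φ y = b + c • A (inversion p 1 y - p) := fun y hy => by
        rw [hφ y hy, smul_div_norm_sq_eq_smul_inversion_sub]
      exact (halfBallBounds_inversion hp).affine_comp hc.le
        (hasFDerivAt_inversion hp0).differentiableAt hφ'
  have hbdd : BddAbove {r : ℝ | ∃ x, ‖x‖ ≤ 1 / 2 ∧ r = ‖φ x - φ 0‖} :=
    ⟨‖fderiv ℝ φ 0‖, by rintro _ ⟨x, hx, rfl⟩; exact hle x hx⟩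
  refine ⟨hle, ?_⟩
  calc (1 / 3 : ℝ) * ‖fderiv ℝ φ 0‖ ≤ ‖fderiv ℝ φ 0‖ / 2 := by
        linarith [norm_nonneg (fderiv ℝ φ 0)]
    _ ≤ ‖φ x₀ - φ 0‖ := hlow
    _ ≤ _ := le_csSup hbdd ⟨x₀, hx₀, rfl⟩
end

section
/- Let n ≥ 3 and let φ : Bⁿ → ℝⁿ be the restriction of a Möbius transformation of Sⁿ. Then there exists a constant C = C(n) > 0 such that |φ(x) − φ(0) − Dφ(0)x| ≤ C ‖Dφ(0)‖ |x|² for all x with |x| ≤ 1/2. -/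
set_option maxHeartbeats 1000000

open scoped RealInnerProductSpace

section Helpers

variable {F : Type*} [NormedAddCommGroup F] [InnerProductSpace ℝ F]

private lemma moebius_aux_inv_hasFDeriv (p : F) (hp : p ≠ 0) (c : ℝ) :
    ∃ D : F →L[ℝ] F, HasFDerivAt (fun y => (c / ‖y - p‖ ^ 2) • (y - p)) D 0 ∧
      ∀ h, D h = (c / ‖p‖ ^ 2) • h - ((2 * c * ⟪p, h⟫) / ‖p‖ ^ 4) • p := by
  have hsub : HasFDerivAt (fun y : F => y - p) (ContinuousLinearMap.id ℝ F) 0 :=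
    (hasFDerivAt_id (0 : F)).sub_const p
  have hf : HasFDerivAt (fun y : F => ‖y - p‖ ^ 2)
      (2 • (innerSL ℝ ((0 : F) - p)).comp (ContinuousLinearMap.id ℝ F)) 0 := hsub.norm_sq
  have h0 : ((0 : F) - p) = -p := by simp
  have hne : (‖(0:F) - p‖ ^ 2 : ℝ) ≠ 0 := by
    rw [h0]
    exact pow_ne_zero 2 (norm_ne_zero_iff.2 (neg_ne_zero.2 hp))
  have hinv : HasFDerivAt (fun y : F => (‖y - p‖ ^ 2)⁻¹)
      ((-(ContinuousLinearMap.mulLeftRight ℝ ℝ (‖(0:F) - p‖^2)⁻¹ (‖(0:F) - p‖^2)⁻¹)).comp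
        (2 • (innerSL ℝ ((0 : F) - p)).comp (ContinuousLinearMap.id ℝ F))) 0 :=
    (hasFDerivAt_inv' (𝕜 := ℝ) hne).comp 0 hf
  have hc : HasFDerivAt (fun y : F => c / ‖y - p‖ ^ 2)
      (c • ((-(ContinuousLinearMap.mulLeftRight ℝ ℝ (‖(0:F) - p‖^2)⁻¹ (‖(0:F) - p‖^2)⁻¹)).comp
        (2 • (innerSL ℝ ((0 : F) - p)).comp (ContinuousLinearMap.id ℝ F)))) 0 := by
    simp only [div_eq_mul_inv]
    exact hinv.const_mul c
  have hD := hc.smul hsub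
  refine ⟨_, hD, fun h => ?_⟩
  simp only [ContinuousLinearMap.add_apply, ContinuousLinearMap.smul_apply,
    ContinuousLinearMap.coe_comp', Function.comp_apply, ContinuousLinearMap.neg_apply,
    ContinuousLinearMap.mulLeftRight_apply, ContinuousLinearMap.smulRight_apply,
    ContinuousLinearMap.coe_id', id_eq, innerSL_apply_apply, h0, smul_eq_mul,
    inner_neg_left, norm_neg]
  match_scalars <;> (field_simp; try ring)

private lemma moebius_aux_key_bound (p x : F) (hp : 1 ≤ ‖p‖) (hx : ‖x‖ ≤ 1 / 2)
    (c : ℝ) (hc : 0 < c) :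
    ‖(c / ‖x - p‖ ^ 2) • (x - p) - (c / ‖(0:F) - p‖ ^ 2) • ((0:F) - p) -
        ((c / ‖p‖ ^ 2) • x - ((2 * c * ⟪p, x⟫) / ‖p‖ ^ 4) • p)‖ ≤
      40 * (c / ‖p‖ ^ 2) * ‖x‖ ^ 2 := by
  set q : ℝ := ‖p‖ ^ 2 with hq
  set s : ℝ := ‖x‖ ^ 2 with hs
  set t : ℝ := ⟪p, x⟫ with ht
  set r : ℝ := ‖x - p‖ ^ 2 with hrdef
  have hp0 : (0:ℝ) < ‖p‖ := lt_of_lt_of_le one_pos hp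
  have hq1 : (1:ℝ) ≤ q := by rw [hq]; nlinarith
  have hq0 : (0:ℝ) < q := lt_of_lt_of_le one_pos hq1
  have hs0 : (0:ℝ) ≤ s := by rw [hs]; positivity
  have hr : r = q - 2 * t + s := by
    rw [hrdef, hq, hs, ht, @norm_sub_sq_real F _ _ x p, real_inner_comm x p]; ring
  have hxp : ‖p‖ - ‖x‖ ≤ ‖x - p‖ := by
    have := norm_sub_norm_le p x
    rwa [norm_sub_rev p x] at this
  have hr4 : q / 4 ≤ r := by
    have h1 : ‖p‖ / 2 ≤ ‖x - p‖ := by linarith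
    have : (‖p‖ / 2) ^ 2 ≤ ‖x - p‖ ^ 2 := by
      apply pow_le_pow_left₀ (by linarith) h1
    rw [hrdef, hq]; nlinarith
  have hr0 : (0:ℝ) < r := lt_of_lt_of_le (by linarith) hr4
  -- the vector identity
  have hid : (c / r) • (x - p) - (c / ‖(0:F) - p‖ ^ 2) • ((0:F) - p) -
        ((c / q) • x - ((2 * c * t) / ‖p‖ ^ 4) • p) =
      (c / (r * q ^ 2)) • (q • (s • p + (2 * t) • x - s • x) + (2 * t * s - 4 * t ^ 2) • p) := by
    have h0 : ((0:F) - p) = -p := by simp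
    rw [h0, norm_neg, ← hq]
    have hq4 : ‖p‖ ^ 4 = q ^ 2 := by rw [hq]; ring
    rw [hq4]
    match_scalars <;>
    · field_simp
      rw [hr]
      ring
  rw [hid]
  -- norm bound on the bracket
  have htb : |t| ≤ ‖p‖ * ‖x‖ := abs_real_inner_le_norm p x
  have hxb : ‖x‖ ≤ ‖p‖ := by linarith
  have h1 : ‖s • p + (2 * t) • x - s • x‖ ≤ s * ‖p‖ + 2 * |t| * ‖x‖ + s * ‖x‖ := by
    calc ‖s • p + (2 * t) • x - s • x‖ ≤ ‖s • p + (2 * t) • x‖ + ‖s • x‖ := norm_sub_le _ _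
      _ ≤ ‖s • p‖ + ‖(2 * t) • x‖ + ‖s • x‖ := by gcongr; exact norm_add_le _ _
      _ = s * ‖p‖ + 2 * |t| * ‖x‖ + s * ‖x‖ := by
          rw [norm_smul, norm_smul, norm_smul]
          simp [Real.norm_eq_abs, abs_mul, abs_two, abs_of_nonneg hs0]
  have habs : |2 * t * s - 4 * t ^ 2| ≤ 2 * |t| * s + 4 * t ^ 2 := by
    calc |2 * t * s - 4 * t ^ 2| ≤ |2 * t * s| + |4 * t ^ 2| := abs_sub _ _
      _ = 2 * |t| * s + 4 * t ^ 2 := by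
          rw [abs_mul, abs_mul, abs_of_nonneg hs0, abs_two, abs_mul, abs_of_nonneg (sq_nonneg t)]
          norm_num
  have hNb : ‖q • (s • p + (2 * t) • x - s • x) + (2 * t * s - 4 * t ^ 2) • p‖ ≤
      10 * q * ‖p‖ * s := by
    have ht2 : t ^ 2 ≤ q * s := by rw [hq, hs]; nlinarith [sq_abs t, abs_nonneg t]
    have htq : |t| ≤ q := by
      rw [hq]; calc |t| ≤ ‖p‖ * ‖x‖ := htb
        _ ≤ ‖p‖ * ‖p‖ := by gcongr
        _ = ‖p‖ ^ 2 := by ring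
    have hA : |t| * ‖x‖ ≤ ‖p‖ * s := by
      have := mul_le_mul_of_nonneg_right htb (norm_nonneg x)
      rw [hs]; nlinarith
    have h2' : s * ‖x‖ ≤ ‖p‖ * s := by nlinarith
    calc ‖q • (s • p + (2 * t) • x - s • x) + (2 * t * s - 4 * t ^ 2) • p‖
        ≤ ‖q • (s • p + (2 * t) • x - s • x)‖ + ‖(2 * t * s - 4 * t ^ 2) • p‖ := norm_add_le _ _
      _ = q * ‖s • p + (2 * t) • x - s • x‖ + |2 * t * s - 4 * t ^ 2| * ‖p‖ := by
          rw [norm_smul, norm_smul, Real.norm_eq_abs, Real.norm_eq_abs, abs_of_nonneg hq0.le]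
      _ ≤ q * (s * ‖p‖ + 2 * |t| * ‖x‖ + s * ‖x‖) + (2 * |t| * s + 4 * t ^ 2) * ‖p‖ :=
          add_le_add (mul_le_mul_of_nonneg_left h1 hq0.le)
            (mul_le_mul_of_nonneg_right habs (norm_nonneg p))
      _ ≤ 10 * q * ‖p‖ * s := by
          nlinarith [mul_le_mul_of_nonneg_left hA hq0.le,
            mul_le_mul_of_nonneg_left h2' hq0.le,
            mul_le_mul_of_nonneg_left (mul_le_mul_of_nonneg_right htq hs0) hp0.le,
            mul_le_mul_of_nonneg_left ht2 hp0.le]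
  rw [norm_smul, Real.norm_eq_abs, abs_of_nonneg (by positivity)]
  calc c / (r * q ^ 2) * ‖q • (s • p + (2 * t) • x - s • x) + (2 * t * s - 4 * t ^ 2) • p‖
      ≤ c / (r * q ^ 2) * (10 * q * ‖p‖ * s) := by gcongr
    _ = 10 * c * ‖p‖ * s / (r * q) := by field_simp
    _ ≤ 40 * c * s / q := by
        rw [div_le_div_iff₀ (by positivity) (by positivity)]
        have h40 : 10 * ‖p‖ ≤ 40 * r := by nlinarith
        nlinarith [mul_nonneg (mul_nonneg (mul_nonneg hc.le hs0) hq0.le)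
          (by linarith : (0:ℝ) ≤ 40 * r - 10 * ‖p‖)]
    _ = 40 * (c / q) * s := by ring

end Helpers

/-- For `n ≥ 3` there is `C = C(n) > 0` such that every restriction `φ : Bⁿ → ℝⁿ` of a Möbius
transformation of `Sⁿ` satisfies `|φ(x) − φ(0) − Dφ(0)x| ≤ C‖Dφ(0)‖|x|²` for `|x| ≤ 1/2`. -/
theorem moebius_second_order_estimate (n : ℕ) (hn : 3 ≤ n) :
    ∃ C : ℝ, 0 < C ∧
      ∀ φ : EuclideanSpace ℝ (Fin n) → EuclideanSpace ℝ (Fin n), IsMoebiusOnBall φ →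
        ∀ x, ‖x‖ ≤ 1 / 2 →
          ‖φ x - φ 0 - fderiv ℝ φ 0 x‖ ≤ C * ‖fderiv ℝ φ 0‖ * ‖x‖ ^ 2 := by
  refine ⟨40, by norm_num, ?_⟩
  set E := EuclideanSpace ℝ (Fin n) with hE
  intro φ hφ x hx
  have hx1 : ‖x‖ < 1 := lt_of_le_of_lt hx (by norm_num)
  have h01 : ‖(0 : E)‖ < 1 := by simp
  rcases hφ with ⟨b, p, c, A, hc, hf⟩ | ⟨b, p, c, A, hc, hp1, hf⟩
  · -- affine case: the error is exactly 0
    have hψ : HasFDerivAt (fun y : E => b + c • A (y - p))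
        (c • A.toContinuousLinearMap) 0 := by
      have h1 : HasFDerivAt (fun y : E => A (y - p)) A.toContinuousLinearMap 0 := by
        have := (A.toContinuousLinearMap.hasFDerivAt (x := (0:E) - p)).comp 0
          ((hasFDerivAt_id (0:E)).sub_const p)
        simpa [Function.comp_def] using this
      exact (h1.const_smul c).const_add b
    have hev : φ =ᶠ[nhds (0:E)] fun y => b + c • A (y - p) := by
      filter_upwards [Metric.ball_mem_nhds (0:E) one_pos] with y hy
      exact hf y (by simpa [Metric.mem_ball, dist_zero_right] using hy)
    have hD : HasFDerivAt φ (c • A.toContinuousLinearMap) 0 :=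
      hψ.congr_of_eventuallyEq hev
    rw [hD.fderiv, hf x hx1, hf 0 h01]
    have hz : (b + c • A (x - p)) - (b + c • A ((0:E) - p)) -
        (c • A.toContinuousLinearMap) x = 0 := by
      simp only [ContinuousLinearMap.smul_apply, LinearIsometry.coe_toContinuousLinearMap,
        map_sub, zero_sub, map_neg, smul_neg, smul_sub]
      abel
    rw [hz, norm_zero]
    positivity
  · -- inversion case
    have hp0 : (0:ℝ) < ‖p‖ := lt_of_lt_of_le one_pos hp1
    have hpne : p ≠ 0 := norm_pos_iff.mp hp0
    obtain ⟨D, hD, hDval⟩ := moebius_aux_inv_hasFDeriv p hpne c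
    set g : E → E := fun y => (c / ‖y - p‖ ^ 2) • (y - p) with hg
    have hψ : HasFDerivAt (fun y : E => b + A (g y))
        (A.toContinuousLinearMap.comp D) 0 :=
      ((A.toContinuousLinearMap.hasFDerivAt.comp 0 hD)).const_add b
    have hev : φ =ᶠ[nhds (0:E)] fun y => b + A (g y) := by
      filter_upwards [Metric.ball_mem_nhds (0:E) one_pos] with y hy
      rw [hf y (by simpa [Metric.mem_ball, dist_zero_right] using hy), hg]
      simp [map_smul]
    have hT : HasFDerivAt φ (A.toContinuousLinearMap.comp D) 0 :=
      hψ.congr_of_eventuallyEq hev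
    set T := A.toContinuousLinearMap.comp D with hTdef
    rw [hT.fderiv]
    -- lower bound on ‖T‖
    have hDp : D p = -((c / ‖p‖ ^ 2) • p) := by
      rw [hDval p, real_inner_self_eq_norm_sq]
      match_scalars
      field_simp
      ring
    have hTnorm : c / ‖p‖ ^ 2 ≤ ‖T‖ := by
      have h1 : ‖T p‖ = (c / ‖p‖ ^ 2) * ‖p‖ := by
        rw [hTdef]
        simp only [ContinuousLinearMap.coe_comp', Function.comp_apply,
          LinearIsometry.coe_toContinuousLinearMap]
        rw [A.norm_map, hDp, norm_neg, norm_smul, Real.norm_eq_abs,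
          abs_of_nonneg (by positivity)]
      have h2 := T.le_opNorm p
      rw [h1] at h2
      exact le_of_mul_le_mul_right h2 hp0
    -- the estimate
    have hval : φ x - φ 0 - T x = A (g x - g 0 - D x) := by
      rw [hf x hx1, hf 0 h01, hTdef]
      simp only [ContinuousLinearMap.coe_comp', Function.comp_apply,
        LinearIsometry.coe_toContinuousLinearMap]
      rw [map_sub, map_sub, hg]
      simp [map_smul]
      try abel
    rw [hval, A.norm_map]
    have hkey := moebius_aux_key_bound p x hp1 hx c hc
    have hgx : g x - g 0 - D x =
        (c / ‖x - p‖ ^ 2) • (x - p) - (c / ‖(0:E) - p‖ ^ 2) • ((0:E) - p) -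
          ((c / ‖p‖ ^ 2) • x - ((2 * c * ⟪p, x⟫) / ‖p‖ ^ 4) • p) := by
      rw [hg, hDval x]
    rw [hgx]
    calc _ ≤ 40 * (c / ‖p‖ ^ 2) * ‖x‖ ^ 2 := hkey
      _ ≤ 40 * ‖T‖ * ‖x‖ ^ 2 := by gcongr
end
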